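/- arXiv:2304.12554 — 5 statements merged into one kernel-verified Lean document; each statement's English description precedes it below -/
import Mathlib

section
/- Let X be a real symmetric N×N matrix with zero diagonal and let ν ∈ ℝ^N with ‖ν‖₂ = 1. Then Σ_{i,j} X_{ij}² − ⟨ν, X²ν⟩ + Σ_{i,k} ν_i² X_{ik}² ≥ 0, and equality holds if and only if X = 0. (This quantity is, up to the factor 2, the quadratic form α'Hα of the Hessian of the eigenvalue-corrected least-squares objective, proving it is positive definite.) -/
open Matrix

lemma stmt_5_symsum {N : ℕ} (f : Fin N → Fin N → ℝ) (g : Fin N → Fin N → ℝ)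
    (h : ∀ j k, f j k + f k j = g j k) :
    ∑ j, ∑ k, f j k = ∑ j, ∑ k, g j k / 2 := by
  have h5 : ∑ j, ∑ k, f k j = ∑ j, ∑ k, f j k := Finset.sum_comm
  have h4 : ∑ j, ∑ k, g j k = ∑ j, ∑ k, f j k + ∑ j, ∑ k, f k j := by
    rw [← Finset.sum_add_distrib]
    refine Finset.sum_congr rfl fun j _ => ?_
    rw [← Finset.sum_add_distrib]
    exact Finset.sum_congr rfl fun k _ => (h j k).symm
  have h6 : ∑ j, ∑ k, g j k / 2 = (∑ j, ∑ k, g j k) / 2 := by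
    rw [Finset.sum_div]
    exact Finset.sum_congr rfl fun j _ => (Finset.sum_div _ _ _).symm
  rw [h6, h4, h5]; ring

lemma stmt_5_lagrange {N : ℕ} (a b : Fin N → ℝ) :
    (∑ j, a j ^ 2) * (∑ k, b k ^ 2) - (∑ j, a j * b j) ^ 2
      = ∑ j, ∑ k, (a j * b k - a k * b j) ^ 2 / 2 := by
  have h1 : (∑ j, a j ^ 2) * (∑ k, b k ^ 2) - (∑ j, a j * b j) ^ 2
      = ∑ j, ∑ k, (a j ^ 2 * b k ^ 2 - (a j * b j) * (a k * b k)) := by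
    rw [sq (∑ j, a j * b j), Finset.sum_mul_sum, Finset.sum_mul_sum,
      ← Finset.sum_sub_distrib]
    exact Finset.sum_congr rfl fun j _ => (Finset.sum_sub_distrib _ _).symm
  rw [h1]
  exact stmt_5_symsum _ _ fun j k => by ring

/-- For a real symmetric `N×N` matrix `X` with zero diagonal and a Euclidean unit vector `ν`,
the quantity `Σ_{i,j} X_{ij}² − ⟨ν, X²ν⟩ + Σ_{i,k} ν_i² X_{ik}²` is nonnegative,
and it vanishes if and only if `X = 0`. -/
theorem stmt_5 {N : ℕ} (X : Matrix (Fin N) (Fin N) ℝ) (hsym : X.IsSymm)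
    (hdiag : ∀ i, X i i = 0) (ν : Fin N → ℝ) (hν : ∑ i, ν i ^ 2 = 1) :
    0 ≤ (∑ i, ∑ j, X i j ^ 2) - ν ⬝ᵥ ((X * X) *ᵥ ν) + ∑ i, ∑ k, ν i ^ 2 * X i k ^ 2 ∧
    ((∑ i, ∑ j, X i j ^ 2) - ν ⬝ᵥ ((X * X) *ᵥ ν) + (∑ i, ∑ k, ν i ^ 2 * X i k ^ 2) = 0
      ↔ X = 0) := by
  have hs : ∀ i l : Fin N, X i l = X l i := fun i l => (hsym.apply i l).symm
  have hQ : ν ⬝ᵥ ((X * X) *ᵥ ν) = ∑ i, (∑ j, X i j * ν j) ^ 2 := by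
    rw [← Matrix.mulVec_mulVec, Matrix.dotProduct_mulVec]
    have hv : ν ᵥ* X = X *ᵥ ν := by rw [← Matrix.mulVec_transpose, hsym]
    rw [hv]
    simp [dotProduct, mulVec, sq]
  have key : (∑ i, ∑ j, X i j ^ 2) - ν ⬝ᵥ ((X * X) *ᵥ ν) + ∑ i, ∑ k, ν i ^ 2 * X i k ^ 2
      = (∑ i, ∑ j, ∑ k, (X i j * ν k - X i k * ν j) ^ 2 / 2)
        + ∑ i, ∑ k, ν i ^ 2 * X i k ^ 2 := by
    have hS : ∑ i, ∑ j, X i j ^ 2 = ∑ i, (∑ j, X i j ^ 2) * (∑ k, ν k ^ 2) := by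
      simp [hν]
    rw [hQ, hS, ← Finset.sum_sub_distrib]
    congr 1
    exact Finset.sum_congr rfl fun i _ => stmt_5_lagrange (fun j => X i j) ν
  have hA : 0 ≤ ∑ i, ∑ j, ∑ k : Fin N, (X i j * ν k - X i k * ν j) ^ 2 / 2 :=
    Finset.sum_nonneg fun i _ => Finset.sum_nonneg fun j _ =>
      Finset.sum_nonneg fun k _ => by positivity
  have hB : 0 ≤ ∑ i, ∑ k : Fin N, ν i ^ 2 * X i k ^ 2 :=
    Finset.sum_nonneg fun i _ => Finset.sum_nonneg fun k _ => by positivity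
  constructor
  · rw [key]; exact add_nonneg hA hB
  constructor
  · intro h
    rw [key] at h
    have hA0 : ∑ i, ∑ j, ∑ k : Fin N, (X i j * ν k - X i k * ν j) ^ 2 / 2 = 0 := by
      linarith
    have hB0 : ∑ i, ∑ k : Fin N, ν i ^ 2 * X i k ^ 2 = 0 := by linarith
    have hz1 : ∀ i j k : Fin N, X i j * ν k - X i k * ν j = 0 := by
      intro i j k
      have h1 := (Finset.sum_eq_zero_iff_of_nonneg fun i _ =>
        Finset.sum_nonneg fun j _ => Finset.sum_nonneg fun k _ => by positivity).mp hA0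
        i (Finset.mem_univ i)
      have h2 := (Finset.sum_eq_zero_iff_of_nonneg fun j _ =>
        Finset.sum_nonneg fun k _ => by positivity).mp h1 j (Finset.mem_univ j)
      have h3 := (Finset.sum_eq_zero_iff_of_nonneg fun k _ => by positivity).mp h2
        k (Finset.mem_univ k)
      have := pow_eq_zero_iff (n := 2) (by norm_num) |>.mp (by linarith : (X i j * ν k - X i k * ν j) ^ 2 = 0)
      exact this
    have hz2 : ∀ i k : Fin N, ν i * X i k = 0 := by
      intro i k
      have h1 := (Finset.sum_eq_zero_iff_of_nonneg fun i _ =>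
        Finset.sum_nonneg fun k _ => by positivity).mp hB0 i (Finset.mem_univ i)
      have h2 := (Finset.sum_eq_zero_iff_of_nonneg fun k _ => by positivity).mp h1
        k (Finset.mem_univ k)
      have : (ν i * X i k) ^ 2 = 0 := by rw [mul_pow]; exact h2
      exact pow_eq_zero_iff (n := 2) (by norm_num) |>.mp this
    obtain ⟨k0, hk0⟩ : ∃ k, ν k ≠ 0 := by
      by_contra hc
      push_neg at hc
      rw [Finset.sum_eq_zero (fun i _ => by rw [hc i]; ring)] at hν
      norm_num at hν
    ext i j
    have hXk0 : X i k0 = 0 := by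
      have := hz2 k0 i
      have h0 : X k0 i = 0 := by
        rcases mul_eq_zero.mp this with h | h
        · exact absurd h hk0
        · exact h
      rw [hs i k0, h0]
    have := hz1 i j k0
    rw [hXk0, zero_mul, sub_zero] at this
    rcases mul_eq_zero.mp this with h | h
    · exact h
    · exact absurd h hk0
  · intro h
    subst h
    simp
end

section
/- The L×L matrix E[Z₁₂ Z₁₂ᵀ] − E[Z₁₂ Z₂₃ᵀ] is symmetric positive semidefinite. -/
open MeasureTheory ProbabilityTheory
open Matrix

lemma aux_spanning {α : Type*} {C : Set (Set α)} (h : Set.univ ∈ C) : IsCountablySpanning C :=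
  ⟨fun _ => Set.univ, fun _ => h, Set.iUnion_const _⟩

lemma aux_mul_integrable {α : Type*} {m : MeasurableSpace α} {μ : Measure α} {f g : α → ℝ}
    (hf : MemLp f 2 μ) (hg : MemLp g 2 μ) : Integrable (fun x => f x * g x) μ := by
  rw [← memLp_one_iff_integrable]
  have h : MemLp (g • f) 1 μ := hf.smul hg
  exact (by simpa [smul_eq_mul, mul_comm] using h : MemLp (f * g) 1 μ)

lemma aux_sum_integral {α : Type*} [MeasurableSpace α] {μ : Measure α} {L : ℕ}
    (Z Z' : Fin L → α → ℝ) (hZ : ∀ l, MemLp (Z l) 2 μ) (hZ' : ∀ l, MemLp (Z' l) 2 μ)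
    (x : Fin L → ℝ) :
    ∑ l, ∑ l', (x l * x l') * ∫ ω, Z l ω * Z' l' ω ∂μ
      = ∫ ω, (∑ l, x l * Z l ω) * (∑ l', x l' * Z' l' ω) ∂μ := by
  have hpt : ∀ ω, (∑ l, x l * Z l ω) * (∑ l', x l' * Z' l' ω)
      = ∑ l, ∑ l', (x l * x l') * (Z l ω * Z' l' ω) := by
    intro ω
    rw [Finset.sum_mul_sum]
    refine Finset.sum_congr rfl fun l _ => Finset.sum_congr rfl fun l' _ => by ring
  simp_rw [hpt]
  rw [integral_finset_sum _ (fun l _ => integrable_finset_sum _ fun l' _ =>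
    (aux_mul_integrable (hZ l) (hZ' l')).const_mul _)]
  refine Finset.sum_congr rfl fun l _ => ?_
  rw [integral_finset_sum _ (fun l' _ => (aux_mul_integrable (hZ l) (hZ' l')).const_mul _)]
  exact Finset.sum_congr rfl fun l' _ => (integral_const_mul _ _).symm

section Law
variable {Ω S T : Type*} [MeasurableSpace Ω] [MeasurableSpace S] [MeasurableSpace T]

/-- rectangles in a product -/
def rcl (S T : Type*) [MeasurableSpace S] [MeasurableSpace T] : Set (Set (S × T)) :=
  Set.image2 (· ×ˢ ·) {s | MeasurableSet s} {t | MeasurableSet t}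

lemma rcl_univ_mem : Set.univ ∈ rcl S T :=
  ⟨Set.univ, MeasurableSet.univ, Set.univ, MeasurableSet.univ, Set.univ_prod_univ⟩

lemma aux_law3 (μ : Measure Ω) [IsProbabilityMeasure μ] {a b : Ω → S} {c : Ω → T}
    (ha : Measurable a) (hb : Measurable b) (hc : Measurable c)
    (hfact : ∀ A B C : _, MeasurableSet A → MeasurableSet B → MeasurableSet C →
      μ (b ⁻¹' A ∩ (a ⁻¹' B ∩ c ⁻¹' C)) = μ (b ⁻¹' A) * (μ (a ⁻¹' B) * μ (c ⁻¹' C))) :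
    μ.map (fun ω => (b ω, (a ω, c ω))) = (μ.map b).prod ((μ.map a).prod (μ.map c)) := by
  have hPb : IsProbabilityMeasure (μ.map b) := Measure.isProbabilityMeasure_map hb.aemeasurable
  have hPa : IsProbabilityMeasure (μ.map a) := Measure.isProbabilityMeasure_map ha.aemeasurable
  have hPc : IsProbabilityMeasure (μ.map c) := Measure.isProbabilityMeasure_map hc.aemeasurable
  have hf : Measurable fun ω => (b ω, (a ω, c ω)) := hb.prodMk (ha.prodMk hc)
  have hPm : IsProbabilityMeasure (μ.map fun ω => (b ω, (a ω, c ω))) :=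
    Measure.isProbabilityMeasure_map hf.aemeasurable
  have hgen2 : MeasurableSpace.generateFrom (rcl S T) = Prod.instMeasurableSpace :=
    generateFrom_prod
  have hgen : (Prod.instMeasurableSpace : MeasurableSpace (S × (S × T)))
      = MeasurableSpace.generateFrom
        (Set.image2 (· ×ˢ ·) {s : Set S | MeasurableSet s} (rcl S T)) :=
    (generateFrom_eq_prod MeasurableSpace.generateFrom_measurableSet hgen2
      isCountablySpanning_measurableSet (aux_spanning rcl_univ_mem)).symm
  refine ext_of_generate_finite _ hgen
    (MeasurableSpace.isPiSystem_measurableSet.prod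
      (MeasurableSpace.isPiSystem_measurableSet.prod MeasurableSpace.isPiSystem_measurableSet))
    ?_ (by simp)
  rintro _ ⟨A, hA, _, ⟨B, hB, C, hC, rfl⟩, rfl⟩
  have hpre : (fun ω => (b ω, (a ω, c ω))) ⁻¹' (A ×ˢ B ×ˢ C)
      = b ⁻¹' A ∩ (a ⁻¹' B ∩ c ⁻¹' C) := by
    ext ω; simp [Set.mem_prod, and_assoc]
  rw [Measure.map_apply hf ((hA.prod (hB.prod hC))), hpre, hfact A B C hA hB hC,
    Measure.prod_prod, Measure.prod_prod, Measure.map_apply hb hA, Measure.map_apply ha hB,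
    Measure.map_apply hc hC]

lemma aux_law5 (μ : Measure Ω) [IsProbabilityMeasure μ] {a b d : Ω → S} {c e : Ω → T}
    (ha : Measurable a) (hb : Measurable b) (hc : Measurable c)
    (hd : Measurable d) (he : Measurable e)
    (hfact : ∀ A B C D E : _, MeasurableSet A → MeasurableSet B → MeasurableSet C →
      MeasurableSet D → MeasurableSet E →
      μ (b ⁻¹' A ∩ ((a ⁻¹' B ∩ c ⁻¹' C) ∩ (d ⁻¹' D ∩ e ⁻¹' E)))
        = μ (b ⁻¹' A) * ((μ (a ⁻¹' B) * μ (c ⁻¹' C)) * (μ (d ⁻¹' D) * μ (e ⁻¹' E)))) :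
    μ.map (fun ω => (b ω, ((a ω, c ω), (d ω, e ω))))
      = (μ.map b).prod (((μ.map a).prod (μ.map c)).prod ((μ.map d).prod (μ.map e))) := by
  have hPb : IsProbabilityMeasure (μ.map b) := Measure.isProbabilityMeasure_map hb.aemeasurable
  have hPa : IsProbabilityMeasure (μ.map a) := Measure.isProbabilityMeasure_map ha.aemeasurable
  have hPc : IsProbabilityMeasure (μ.map c) := Measure.isProbabilityMeasure_map hc.aemeasurable
  have hPd : IsProbabilityMeasure (μ.map d) := Measure.isProbabilityMeasure_map hd.aemeasurable
  have hPe : IsProbabilityMeasure (μ.map e) := Measure.isProbabilityMeasure_map he.aemeasurable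
  have hf : Measurable fun ω => (b ω, ((a ω, c ω), (d ω, e ω))) :=
    hb.prodMk ((ha.prodMk hc).prodMk (hd.prodMk he))
  have hPm : IsProbabilityMeasure (μ.map fun ω => (b ω, ((a ω, c ω), (d ω, e ω)))) :=
    Measure.isProbabilityMeasure_map hf.aemeasurable
  have hgen2 : MeasurableSpace.generateFrom (rcl S T) = Prod.instMeasurableSpace :=
    generateFrom_prod
  have hgen4 : MeasurableSpace.generateFrom (Set.image2 (· ×ˢ ·) (rcl S T) (rcl S T))
      = Prod.instMeasurableSpace :=
    generateFrom_eq_prod hgen2 hgen2 (aux_spanning rcl_univ_mem) (aux_spanning rcl_univ_mem)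
  have hgen : (Prod.instMeasurableSpace : MeasurableSpace (S × ((S × T) × (S × T))))
      = MeasurableSpace.generateFrom
        (Set.image2 (· ×ˢ ·) {s : Set S | MeasurableSet s}
          (Set.image2 (· ×ˢ ·) (rcl S T) (rcl S T))) :=
    (generateFrom_eq_prod MeasurableSpace.generateFrom_measurableSet hgen4
      isCountablySpanning_measurableSet
      (aux_spanning ⟨Set.univ, rcl_univ_mem, Set.univ, rcl_univ_mem, Set.univ_prod_univ⟩)).symm
  refine ext_of_generate_finite _ hgen
    (MeasurableSpace.isPiSystem_measurableSet.prod
      ((MeasurableSpace.isPiSystem_measurableSet.prod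
          MeasurableSpace.isPiSystem_measurableSet).prod
        (MeasurableSpace.isPiSystem_measurableSet.prod
          MeasurableSpace.isPiSystem_measurableSet)))
    ?_ (by simp)
  rintro _ ⟨A, hA, _, ⟨_, ⟨B, hB, C, hC, rfl⟩, _, ⟨D, hD, E, hE, rfl⟩, rfl⟩, rfl⟩
  have hpre : (fun ω => (b ω, ((a ω, c ω), (d ω, e ω)))) ⁻¹' (A ×ˢ (B ×ˢ C) ×ˢ (D ×ˢ E))
      = b ⁻¹' A ∩ ((a ⁻¹' B ∩ c ⁻¹' C) ∩ (d ⁻¹' D ∩ e ⁻¹' E)) := by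
    ext ω; simp [Set.mem_prod, and_assoc]
  rw [Measure.map_apply hf (hA.prod ((hB.prod hC).prod (hD.prod hE))), hpre,
    hfact A B C D E hA hB hC hD hE, Measure.prod_prod, Measure.prod_prod, Measure.prod_prod,
    Measure.prod_prod, Measure.map_apply hb hA, Measure.map_apply ha hB,
    Measure.map_apply hc hC, Measure.map_apply hd hD, Measure.map_apply he hE]
end Law

/-- Let `ξ₁,ξ₂,ξ₃` be i.i.d. random elements of `S` and `W₁₂,W₂₃` i.i.d. random elements of
`T`, independent of the `ξ`'s and of each other.  Let `g : S × S × T → ℝ^L` be measurable and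
symmetric in its first two arguments, set `Z_{ij} := g(ξ_i, ξ_j, W_{ij})`, and assume each
component of `Z₁₂` is square-integrable.  Then the `L×L` matrix
`E[Z₁₂Z₁₂ᵀ] − E[Z₁₂Z₂₃ᵀ]` is symmetric positive semidefinite.
Here `ξ 0, ξ 1, ξ 2` play the roles of `ξ₁, ξ₂, ξ₃` and `W 0, W 1` those of `W₁₂, W₂₃`. -/
theorem stmt_9 {Ω S T : Type*} [MeasurableSpace Ω] [MeasurableSpace S] [MeasurableSpace T]
    (μ : Measure Ω) [IsProbabilityMeasure μ] (L : ℕ)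
    (ξ : Fin 3 → Ω → S) (W : Fin 2 → Ω → T) (g : S → S → T → Fin L → ℝ)
    (hgmeas : Measurable fun p : S × S × T => g p.1 p.2.1 p.2.2)
    (hgsymm : ∀ x y w, g x y w = g y x w)
    (hξmeas : ∀ i, Measurable (ξ i)) (hWmeas : ∀ j, Measurable (W j))
    (hξindep : iIndepFun ξ μ)
    (hWindep : iIndepFun W μ)
    (hξW : IndepFun (fun ω i => ξ i ω) (fun ω j => W j ω) μ)
    (hξid : ∀ i, IdentDistrib (ξ i) (ξ 0) μ μ)
    (hWid : ∀ j, IdentDistrib (W j) (W 0) μ μ)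
    (hsq : ∀ l, Integrable (fun ω => (g (ξ 0 ω) (ξ 1 ω) (W 0 ω) l) ^ 2) μ) :
    Matrix.PosSemidef (Matrix.of fun l l' : Fin L =>
      (∫ ω, g (ξ 0 ω) (ξ 1 ω) (W 0 ω) l * g (ξ 0 ω) (ξ 1 ω) (W 0 ω) l' ∂μ)
        - ∫ ω, g (ξ 0 ω) (ξ 1 ω) (W 0 ω) l * g (ξ 1 ω) (ξ 2 ω) (W 1 ω) l' ∂μ) := by
  classical
  have hνP : IsProbabilityMeasure (μ.map (ξ 0)) := Measure.isProbabilityMeasure_map (hξmeas 0).aemeasurable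
  have hκP : IsProbabilityMeasure (μ.map (W 0)) := Measure.isProbabilityMeasure_map (hWmeas 0).aemeasurable
  set ν : Measure S := μ.map (ξ 0) with hνdef
  set κ : Measure T := μ.map (W 0) with hκdef
  set P : Measure (S × T) := ν.prod κ with hPdef
  haveI : IsProbabilityMeasure P := by rw [hPdef]; infer_instance
  -- master five-fold factorization
  have hfact5 : ∀ (A : Fin 3 → Set S) (B : Fin 2 → Set T), (∀ i, MeasurableSet (A i)) →
      (∀ j, MeasurableSet (B j)) →
      μ ((ξ 0 ⁻¹' A 0 ∩ ξ 1 ⁻¹' A 1 ∩ ξ 2 ⁻¹' A 2) ∩ (W 0 ⁻¹' B 0 ∩ W 1 ⁻¹' B 1))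
        = μ (ξ 0 ⁻¹' A 0) * μ (ξ 1 ⁻¹' A 1) * μ (ξ 2 ⁻¹' A 2)
            * (μ (W 0 ⁻¹' B 0) * μ (W 1 ⁻¹' B 1)) := by
    intro A B hA hB
    have h1 : (fun ω i => ξ i ω) ⁻¹' (Set.univ.pi A)
        = ξ 0 ⁻¹' A 0 ∩ ξ 1 ⁻¹' A 1 ∩ ξ 2 ⁻¹' A 2 := by
      ext ω
      simp only [Set.mem_preimage, Set.mem_univ_pi, Set.mem_inter_iff]
      exact ⟨fun h => ⟨⟨h 0, h 1⟩, h 2⟩,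
        fun h i => by fin_cases i <;> [exact h.1.1; exact h.1.2; exact h.2]⟩
    have h2 : (fun ω j => W j ω) ⁻¹' (Set.univ.pi B) = W 0 ⁻¹' B 0 ∩ W 1 ⁻¹' B 1 := by
      ext ω
      simp only [Set.mem_preimage, Set.mem_univ_pi, Set.mem_inter_iff]
      exact ⟨fun h => ⟨h 0, h 1⟩, fun h j => by fin_cases j <;> [exact h.1; exact h.2]⟩
    have h3 := hξW.measure_inter_preimage_eq_mul (Set.univ.pi A) (Set.univ.pi B)
      (MeasurableSet.univ_pi hA) (MeasurableSet.univ_pi hB)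
    rw [h1, h2] at h3
    have h4 := hξindep.meas_iInter (s := fun i => ξ i ⁻¹' A i)
      (fun i => ⟨A i, hA i, rfl⟩)
    have h5 := hWindep.meas_iInter (s := fun j => W j ⁻¹' B j)
      (fun j => ⟨B j, hB j, rfl⟩)
    have h6 : (⋂ i, ξ i ⁻¹' A i) = ξ 0 ⁻¹' A 0 ∩ ξ 1 ⁻¹' A 1 ∩ ξ 2 ⁻¹' A 2 := by
      ext ω
      simp only [Set.mem_iInter, Set.mem_inter_iff]
      exact ⟨fun h => ⟨⟨h 0, h 1⟩, h 2⟩,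
        fun h i => by fin_cases i <;> [exact h.1.1; exact h.1.2; exact h.2]⟩
    have h7 : (⋂ j, W j ⁻¹' B j) = W 0 ⁻¹' B 0 ∩ W 1 ⁻¹' B 1 := by
      ext ω
      simp only [Set.mem_iInter, Set.mem_inter_iff]
      exact ⟨fun h => ⟨h 0, h 1⟩, fun h j => by fin_cases j <;> [exact h.1; exact h.2]⟩
    rw [h6] at h4
    rw [h7] at h5
    rw [h3, h4, h5, Fin.prod_univ_three, Fin.prod_univ_two]
  -- specialized factorizations
  have hfact3a : ∀ A B C : _, MeasurableSet A → MeasurableSet B → MeasurableSet C →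
      μ (ξ 1 ⁻¹' A ∩ (ξ 0 ⁻¹' B ∩ W 0 ⁻¹' C))
        = μ (ξ 1 ⁻¹' A) * (μ (ξ 0 ⁻¹' B) * μ (W 0 ⁻¹' C)) := by
    intro A B C hA hB hC
    have h := hfact5 ![B, A, Set.univ] ![C, Set.univ]
      (fun i => by fin_cases i <;> [exact hB; exact hA; exact MeasurableSet.univ])
      (fun j => by fin_cases j <;> [exact hC; exact MeasurableSet.univ])
    simp only [Matrix.cons_val_zero, Matrix.cons_val_one, Matrix.head_cons,
      Matrix.cons_val_two, Matrix.tail_cons, Set.preimage_univ, Set.inter_univ,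
      measure_univ, mul_one] at h
    have hset : ξ 1 ⁻¹' A ∩ (ξ 0 ⁻¹' B ∩ W 0 ⁻¹' C)
        = (ξ 0 ⁻¹' B ∩ ξ 1 ⁻¹' A) ∩ W 0 ⁻¹' C := by
      ext ω; simp only [Set.mem_inter_iff]; tauto
    rw [hset, h]; ring
  have hfact3b : ∀ A B C : _, MeasurableSet A → MeasurableSet B → MeasurableSet C →
      μ (ξ 2 ⁻¹' A ∩ (ξ 1 ⁻¹' B ∩ W 1 ⁻¹' C))
        = μ (ξ 2 ⁻¹' A) * (μ (ξ 1 ⁻¹' B) * μ (W 1 ⁻¹' C)) := by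
    intro A B C hA hB hC
    have h := hfact5 ![Set.univ, B, A] ![Set.univ, C]
      (fun i => by fin_cases i <;> [exact MeasurableSet.univ; exact hB; exact hA])
      (fun j => by fin_cases j <;> [exact MeasurableSet.univ; exact hC])
    simp only [Matrix.cons_val_zero, Matrix.cons_val_one, Matrix.head_cons,
      Matrix.cons_val_two, Matrix.tail_cons, Set.preimage_univ, Set.univ_inter,
      measure_univ, one_mul] at h
    have hset : ξ 2 ⁻¹' A ∩ (ξ 1 ⁻¹' B ∩ W 1 ⁻¹' C)
        = (ξ 1 ⁻¹' B ∩ ξ 2 ⁻¹' A) ∩ W 1 ⁻¹' C := by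
      ext ω; simp only [Set.mem_inter_iff]; tauto
    rw [hset, h]; ring
  have hfactbig : ∀ A B C D E : _, MeasurableSet A → MeasurableSet B → MeasurableSet C →
      MeasurableSet D → MeasurableSet E →
      μ (ξ 1 ⁻¹' A ∩ ((ξ 0 ⁻¹' B ∩ W 0 ⁻¹' C) ∩ (ξ 2 ⁻¹' D ∩ W 1 ⁻¹' E)))
        = μ (ξ 1 ⁻¹' A) * ((μ (ξ 0 ⁻¹' B) * μ (W 0 ⁻¹' C)) * (μ (ξ 2 ⁻¹' D) * μ (W 1 ⁻¹' E))) := by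
    intro A B C D E hA hB hC hD hE
    have h := hfact5 ![B, A, D] ![C, E]
      (fun i => by fin_cases i <;> [exact hB; exact hA; exact hD])
      (fun j => by fin_cases j <;> [exact hC; exact hE])
    simp only [Matrix.cons_val_zero, Matrix.cons_val_one, Matrix.head_cons,
      Matrix.cons_val_two, Matrix.tail_cons] at h
    have hset : ξ 1 ⁻¹' A ∩ ((ξ 0 ⁻¹' B ∩ W 0 ⁻¹' C) ∩ (ξ 2 ⁻¹' D ∩ W 1 ⁻¹' E))
        = (ξ 0 ⁻¹' B ∩ ξ 1 ⁻¹' A ∩ ξ 2 ⁻¹' D) ∩ (W 0 ⁻¹' C ∩ W 1 ⁻¹' E) := by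
      ext ω; simp only [Set.mem_inter_iff]; tauto
    rw [hset, h]; ring
  -- the three laws
  have hlaw1 : μ.map (fun ω => (ξ 1 ω, (ξ 0 ω, W 0 ω))) = ν.prod P := by
    have h := aux_law3 μ (hξmeas 0) (hξmeas 1) (hWmeas 0) hfact3a
    rw [h, (hξid 1).map_eq, ← hνdef, ← hκdef, ← hPdef]
  have hlaw2 : μ.map (fun ω => (ξ 2 ω, (ξ 1 ω, W 1 ω))) = ν.prod P := by
    have h := aux_law3 μ (hξmeas 1) (hξmeas 2) (hWmeas 1) hfact3b
    rw [h, (hξid 2).map_eq, (hξid 1).map_eq, (hWid 1).map_eq, ← hνdef, ← hκdef, ← hPdef]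
  have hlawV : μ.map (fun ω => (ξ 1 ω, ((ξ 0 ω, W 0 ω), (ξ 2 ω, W 1 ω))))
      = ν.prod (P.prod P) := by
    have h := aux_law5 μ (hξmeas 0) (hξmeas 1) (hWmeas 0) (hξmeas 2) (hWmeas 1) hfactbig
    rw [h, (hξid 1).map_eq, (hξid 2).map_eq, (hWid 1).map_eq, ← hνdef, ← hκdef, ← hPdef]
  -- the kernel function on S × (S × T)
  have hqmeas : ∀ l, Measurable (fun p : S × (S × T) => g p.2.1 p.1 p.2.2 l) := fun l =>
    (measurable_pi_apply l).comp (hgmeas.comp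
      ((measurable_snd.fst).prodMk (measurable_fst.prodMk measurable_snd.snd)))
  have hV1meas : Measurable fun ω => (ξ 1 ω, (ξ 0 ω, W 0 ω)) :=
    (hξmeas 1).prodMk ((hξmeas 0).prodMk (hWmeas 0))
  have hV2meas : Measurable fun ω => (ξ 2 ω, (ξ 1 ω, W 1 ω)) :=
    (hξmeas 2).prodMk ((hξmeas 1).prodMk (hWmeas 1))
  have hVmeas : Measurable fun ω => (ξ 1 ω, ((ξ 0 ω, W 0 ω), (ξ 2 ω, W 1 ω))) :=
    (hξmeas 1).prodMk (((hξmeas 0).prodMk (hWmeas 0)).prodMk ((hξmeas 2).prodMk (hWmeas 1)))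
  have hZ12 : ∀ l, MemLp (fun ω => g (ξ 0 ω) (ξ 1 ω) (W 0 ω) l) 2 μ := by
    intro l
    have hm : AEStronglyMeasurable (fun ω => g (ξ 0 ω) (ξ 1 ω) (W 0 ω) l) μ :=
      ((hqmeas l).comp hV1meas).aestronglyMeasurable
    exact (memLp_two_iff_integrable_sq hm).2 (hsq l)
  have hq2 : ∀ l, MemLp (fun p : S × (S × T) => g p.2.1 p.1 p.2.2 l) 2 (ν.prod P) := by
    intro l
    rw [← hlaw1]
    exact (memLp_map_measure_iff (hqmeas l).aestronglyMeasurable hV1meas.aemeasurable).2 (hZ12 l)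
  have hZ23 : ∀ l, MemLp (fun ω => g (ξ 1 ω) (ξ 2 ω) (W 1 ω) l) 2 μ := by
    intro l
    exact (memLp_map_measure_iff (hqmeas l).aestronglyMeasurable hV2meas.aemeasurable).1
      (by rw [hlaw2]; exact hq2 l)
  -- marginal identification
  have hπ1 : (ν.prod (P.prod P)).map
      (fun p : S × ((S × T) × (S × T)) => (p.1, p.2.1)) = ν.prod P := by
    have h := Measure.map_prod_map (f := (id : S → S))
      (g := (Prod.fst : (S × T) × (S × T) → S × T)) ν (P.prod P) measurable_id measurable_fst
    rw [Measure.map_id, Measure.map_fst_prod, measure_univ, one_smul] at h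
    have he : (fun p : S × ((S × T) × (S × T)) => (p.1, p.2.1))
        = Prod.map (id : S → S) (Prod.fst : (S × T) × (S × T) → S × T) := rfl
    rw [he]; exact h.symm
  have hπ2 : (ν.prod (P.prod P)).map
      (fun p : S × ((S × T) × (S × T)) => (p.1, p.2.2)) = ν.prod P := by
    have h := Measure.map_prod_map (f := (id : S → S))
      (g := (Prod.snd : (S × T) × (S × T) → S × T)) ν (P.prod P) measurable_id measurable_snd
    rw [Measure.map_id, Measure.map_snd_prod, measure_univ, one_smul] at h
    have he : (fun p : S × ((S × T) × (S × T)) => (p.1, p.2.2))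
        = Prod.map (id : S → S) (Prod.snd : (S × T) × (S × T) → S × T) := rfl
    rw [he]; exact h.symm
  have hQ1 : ∀ l, MemLp (fun p : S × ((S × T) × (S × T)) => g p.2.1.1 p.1 p.2.1.2 l) 2
      (ν.prod (P.prod P)) := by
    intro l
    exact (memLp_map_measure_iff (hqmeas l).aestronglyMeasurable
      ((measurable_fst.prodMk measurable_snd.fst)).aemeasurable).1
      (by rw [hπ1]; exact hq2 l)
  have hQ2 : ∀ l, MemLp (fun p : S × ((S × T) × (S × T)) => g p.2.2.1 p.1 p.2.2.2 l) 2
      (ν.prod (P.prod P)) := by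
    intro l
    exact (memLp_map_measure_iff (hqmeas l).aestronglyMeasurable
      ((measurable_fst.prodMk measurable_snd.snd)).aemeasurable).1
      (by rw [hπ2]; exact hq2 l)
  have hQ1meas : ∀ l, Measurable (fun p : S × ((S × T) × (S × T)) => g p.2.1.1 p.1 p.2.1.2 l) :=
    fun l => (hqmeas l).comp (measurable_fst.prodMk measurable_snd.fst)
  have hQ2meas : ∀ l, Measurable (fun p : S × ((S × T) × (S × T)) => g p.2.2.1 p.1 p.2.2.2 l) :=
    fun l => (hqmeas l).comp (measurable_fst.prodMk measurable_snd.snd)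
  -- per-pair second-moment identity
  have hBkey : ∀ l l', (∫ ω, g (ξ 0 ω) (ξ 1 ω) (W 0 ω) l * g (ξ 1 ω) (ξ 2 ω) (W 1 ω) l' ∂μ)
      = ∫ y, (∫ u : S × T, g u.1 y u.2 l ∂P) * (∫ u : S × T, g u.1 y u.2 l' ∂P) ∂ν := by
    intro l l'
    have hint : Integrable (fun p : S × ((S × T) × (S × T)) =>
        g p.2.1.1 p.1 p.2.1.2 l * g p.2.2.1 p.1 p.2.2.2 l') (ν.prod (P.prod P)) :=
      aux_mul_integrable (hQ1 l) (hQ2 l')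
    have step1 : (∫ ω, g (ξ 0 ω) (ξ 1 ω) (W 0 ω) l * g (ξ 1 ω) (ξ 2 ω) (W 1 ω) l' ∂μ)
        = ∫ p : S × ((S × T) × (S × T)),
            g p.2.1.1 p.1 p.2.1.2 l * g p.2.2.1 p.1 p.2.2.2 l' ∂(ν.prod (P.prod P)) := by
      rw [← hlawV, integral_map hVmeas.aemeasurable
        ((hQ1meas l).fun_mul (hQ2meas l')).aestronglyMeasurable]
      refine integral_congr_ae (Filter.Eventually.of_forall fun ω => ?_)
      simp only
      rw [hgsymm (ξ 1 ω) (ξ 2 ω) (W 1 ω)]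
    have step2 : (∫ p : S × ((S × T) × (S × T)),
          g p.2.1.1 p.1 p.2.1.2 l * g p.2.2.1 p.1 p.2.2.2 l' ∂(ν.prod (P.prod P)))
        = ∫ y, (∫ u : S × T, g u.1 y u.2 l ∂P) * (∫ u : S × T, g u.1 y u.2 l' ∂P) ∂ν := by
      rw [integral_prod _ hint]
      refine integral_congr_ae (Filter.Eventually.of_forall fun y => ?_)
      exact integral_prod_mul (μ := P) (ν := P)
        (fun u : S × T => g u.1 y u.2 l) (fun v : S × T => g v.1 y v.2 l')
    exact step1.trans step2
  refine Matrix.posSemidef_iff_dotProduct_mulVec.2 ⟨?_, ?_⟩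
  · -- Hermitian
    ext l' l
    simp only [Matrix.conjTranspose_apply, Matrix.of_apply, star_trivial]
    have e1 : (∫ ω, g (ξ 0 ω) (ξ 1 ω) (W 0 ω) l * g (ξ 0 ω) (ξ 1 ω) (W 0 ω) l' ∂μ)
        = ∫ ω, g (ξ 0 ω) (ξ 1 ω) (W 0 ω) l' * g (ξ 0 ω) (ξ 1 ω) (W 0 ω) l ∂μ := by
      refine integral_congr_ae (Filter.Eventually.of_forall fun ω => ?_); ring
    have e2 : (∫ ω, g (ξ 0 ω) (ξ 1 ω) (W 0 ω) l * g (ξ 1 ω) (ξ 2 ω) (W 1 ω) l' ∂μ)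
        = ∫ ω, g (ξ 0 ω) (ξ 1 ω) (W 0 ω) l' * g (ξ 1 ω) (ξ 2 ω) (W 1 ω) l ∂μ := by
      rw [hBkey l l', hBkey l' l]
      refine integral_congr_ae (Filter.Eventually.of_forall fun y => ?_); ring
    rw [e1, e2]
  · -- positive semidefinite quadratic form
    intro x
    -- rewrite the quadratic form as a double sum
    have hquad : star x ⬝ᵥ ((Matrix.of fun l l' : Fin L =>
        (∫ ω, g (ξ 0 ω) (ξ 1 ω) (W 0 ω) l * g (ξ 0 ω) (ξ 1 ω) (W 0 ω) l' ∂μ)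
          - ∫ ω, g (ξ 0 ω) (ξ 1 ω) (W 0 ω) l * g (ξ 1 ω) (ξ 2 ω) (W 1 ω) l' ∂μ) *ᵥ x)
        = ∑ l, ∑ l', (x l * x l') *
            ((∫ ω, g (ξ 0 ω) (ξ 1 ω) (W 0 ω) l * g (ξ 0 ω) (ξ 1 ω) (W 0 ω) l' ∂μ)
              - ∫ ω, g (ξ 0 ω) (ξ 1 ω) (W 0 ω) l * g (ξ 1 ω) (ξ 2 ω) (W 1 ω) l' ∂μ) := by
      simp only [dotProduct, Matrix.mulVec, Matrix.of_apply, Pi.star_apply, star_trivial]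
      refine Finset.sum_congr rfl fun l _ => ?_
      rw [Finset.mul_sum]
      refine Finset.sum_congr rfl fun l' _ => by ring
    rw [hquad]
    have hsplit : ∑ l, ∑ l', (x l * x l') *
        ((∫ ω, g (ξ 0 ω) (ξ 1 ω) (W 0 ω) l * g (ξ 0 ω) (ξ 1 ω) (W 0 ω) l' ∂μ)
          - ∫ ω, g (ξ 0 ω) (ξ 1 ω) (W 0 ω) l * g (ξ 1 ω) (ξ 2 ω) (W 1 ω) l' ∂μ)
        = (∑ l, ∑ l', (x l * x l') *
            ∫ ω, g (ξ 0 ω) (ξ 1 ω) (W 0 ω) l * g (ξ 0 ω) (ξ 1 ω) (W 0 ω) l' ∂μ)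
          - ∑ l, ∑ l', (x l * x l') *
            ∫ ω, g (ξ 0 ω) (ξ 1 ω) (W 0 ω) l * g (ξ 1 ω) (ξ 2 ω) (W 1 ω) l' ∂μ := by
      simp only [mul_sub, Finset.sum_sub_distrib]
    rw [hsplit,
      aux_sum_integral (fun l ω => g (ξ 0 ω) (ξ 1 ω) (W 0 ω) l)
        (fun l ω => g (ξ 0 ω) (ξ 1 ω) (W 0 ω) l) hZ12 hZ12 x,
      aux_sum_integral (fun l ω => g (ξ 0 ω) (ξ 1 ω) (W 0 ω) l)
        (fun l ω => g (ξ 1 ω) (ξ 2 ω) (W 1 ω) l) hZ12 hZ23 x]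
    -- combined kernel
    have hxmeas : Measurable (fun p : S × (S × T) => ∑ l, x l * g p.2.1 p.1 p.2.2 l) :=
      Finset.univ.measurable_sum fun l _ => (hqmeas l).const_mul _
    have hhx2 : MemLp (fun p : S × (S × T) => ∑ l, x l * g p.2.1 p.1 p.2.2 l) 2 (ν.prod P) := by
      have h := memLp_finset_sum' Finset.univ
        (fun l (_ : l ∈ Finset.univ) => (hq2 l).const_mul (x l))
      simpa only [Finset.sum_fn] using h
    -- transfer first integral
    have T1 : (∫ ω, (∑ l, x l * g (ξ 0 ω) (ξ 1 ω) (W 0 ω) l)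
          * (∑ l', x l' * g (ξ 0 ω) (ξ 1 ω) (W 0 ω) l') ∂μ)
        = ∫ p : S × (S × T), (∑ l, x l * g p.2.1 p.1 p.2.2 l)
            * (∑ l', x l' * g p.2.1 p.1 p.2.2 l') ∂(ν.prod P) := by
      rw [← hlaw1, integral_map hV1meas.aemeasurable (hxmeas.fun_mul hxmeas).aestronglyMeasurable]
    -- transfer second integral
    have hH1meas : Measurable (fun p : S × ((S × T) × (S × T)) =>
        ∑ l, x l * g p.2.1.1 p.1 p.2.1.2 l) :=
      Finset.univ.measurable_sum fun l _ => (hQ1meas l).const_mul _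
    have hH2meas : Measurable (fun p : S × ((S × T) × (S × T)) =>
        ∑ l, x l * g p.2.2.1 p.1 p.2.2.2 l) :=
      Finset.univ.measurable_sum fun l _ => (hQ2meas l).const_mul _
    have hH1 : MemLp (fun p : S × ((S × T) × (S × T)) => ∑ l, x l * g p.2.1.1 p.1 p.2.1.2 l) 2
        (ν.prod (P.prod P)) := by
      have h := memLp_finset_sum' Finset.univ
        (fun l (_ : l ∈ Finset.univ) => (hQ1 l).const_mul (x l))
      simpa only [Finset.sum_fn] using h
    have hH2 : MemLp (fun p : S × ((S × T) × (S × T)) => ∑ l, x l * g p.2.2.1 p.1 p.2.2.2 l) 2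
        (ν.prod (P.prod P)) := by
      have h := memLp_finset_sum' Finset.univ
        (fun l (_ : l ∈ Finset.univ) => (hQ2 l).const_mul (x l))
      simpa only [Finset.sum_fn] using h
    have hintH : Integrable (fun p : S × ((S × T) × (S × T)) =>
        (∑ l, x l * g p.2.1.1 p.1 p.2.1.2 l) * (∑ l, x l * g p.2.2.1 p.1 p.2.2.2 l))
        (ν.prod (P.prod P)) := aux_mul_integrable hH1 hH2
    have T2 : (∫ ω, (∑ l, x l * g (ξ 0 ω) (ξ 1 ω) (W 0 ω) l)
          * (∑ l', x l' * g (ξ 1 ω) (ξ 2 ω) (W 1 ω) l') ∂μ)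
        = ∫ y, (∫ u : S × T, ∑ l, x l * g u.1 y u.2 l ∂P)
            * (∫ u : S × T, ∑ l, x l * g u.1 y u.2 l ∂P) ∂ν := by
      have step1 : (∫ ω, (∑ l, x l * g (ξ 0 ω) (ξ 1 ω) (W 0 ω) l)
            * (∑ l', x l' * g (ξ 1 ω) (ξ 2 ω) (W 1 ω) l') ∂μ)
          = ∫ p : S × ((S × T) × (S × T)), (∑ l, x l * g p.2.1.1 p.1 p.2.1.2 l)
              * (∑ l, x l * g p.2.2.1 p.1 p.2.2.2 l) ∂(ν.prod (P.prod P)) := by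
        rw [← hlawV, integral_map hVmeas.aemeasurable
          (hH1meas.fun_mul hH2meas).aestronglyMeasurable]
        refine integral_congr_ae (Filter.Eventually.of_forall fun ω => ?_)
        simp only
        congr 1
        refine Finset.sum_congr rfl fun l _ => ?_
        rw [hgsymm (ξ 1 ω) (ξ 2 ω) (W 1 ω)]
      have step2 : (∫ p : S × ((S × T) × (S × T)), (∑ l, x l * g p.2.1.1 p.1 p.2.1.2 l)
            * (∑ l, x l * g p.2.2.1 p.1 p.2.2.2 l) ∂(ν.prod (P.prod P)))
          = ∫ y, (∫ u : S × T, ∑ l, x l * g u.1 y u.2 l ∂P)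
              * (∫ u : S × T, ∑ l, x l * g u.1 y u.2 l ∂P) ∂ν := by
        rw [integral_prod _ hintH]
        refine integral_congr_ae (Filter.Eventually.of_forall fun y => ?_)
        exact integral_prod_mul (μ := P) (ν := P)
          (fun u : S × T => ∑ l, x l * g u.1 y u.2 l) (fun v : S × T => ∑ l, x l * g v.1 y v.2 l)
      exact step1.trans step2
    rw [T1, T2]
    -- Jensen / variance step
    have hsqint : Integrable (fun p : S × (S × T) => (∑ l, x l * g p.2.1 p.1 p.2.2 l)
        * (∑ l, x l * g p.2.1 p.1 p.2.2 l)) (ν.prod P) := aux_mul_integrable hhx2 hhx2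
    have hright : (∫ p : S × (S × T), (∑ l, x l * g p.2.1 p.1 p.2.2 l)
          * (∑ l, x l * g p.2.1 p.1 p.2.2 l) ∂(ν.prod P))
        = ∫ y, (∫ u : S × T, (∑ l, x l * g u.1 y u.2 l) * (∑ l, x l * g u.1 y u.2 l) ∂P) ∂ν :=
      integral_prod _ hsqint
    have hslice : ∀ᵐ y ∂ν, Integrable
        (fun u : S × T => (∑ l, x l * g u.1 y u.2 l) * (∑ l, x l * g u.1 y u.2 l)) P :=
      hsqint.prod_right_ae
    have hptwise : ∀ᵐ y ∂ν,
        (∫ u : S × T, ∑ l, x l * g u.1 y u.2 l ∂P) * (∫ u : S × T, ∑ l, x l * g u.1 y u.2 l ∂P)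
          ≤ ∫ u : S × T, (∑ l, x l * g u.1 y u.2 l) * (∑ l, x l * g u.1 y u.2 l) ∂P := by
      filter_upwards [hslice] with y hy
      have hm : AEStronglyMeasurable (fun u : S × T => ∑ l, x l * g u.1 y u.2 l) P :=
        (hxmeas.comp (measurable_prodMk_left (x := y))).aestronglyMeasurable
      have hmem : MemLp (fun u : S × T => ∑ l, x l * g u.1 y u.2 l) 2 P :=
        (memLp_two_iff_integrable_sq hm).2 (by simpa only [pow_two] using hy)
      have hvar := variance_nonneg (fun u : S × T => ∑ l, x l * g u.1 y u.2 l) P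
      rw [variance_eq_sub hmem] at hvar
      have h2 := sub_nonneg.1 hvar
      calc (∫ u : S × T, ∑ l, x l * g u.1 y u.2 l ∂P)
            * (∫ u : S × T, ∑ l, x l * g u.1 y u.2 l ∂P)
          = (∫ u : S × T, ∑ l, x l * g u.1 y u.2 l ∂P) ^ 2 := (sq _).symm
        _ ≤ ∫ u : S × T, (fun v : S × T => ∑ l, x l * g v.1 y v.2 l) u ^ 2 ∂P := by
            simpa using h2
        _ = ∫ u : S × T, (∑ l, x l * g u.1 y u.2 l) * (∑ l, x l * g u.1 y u.2 l) ∂P := by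
            refine integral_congr_ae (Filter.Eventually.of_forall fun u => ?_)
            simp [pow_two]
    have hgi : Integrable (fun y =>
        ∫ u : S × T, (∑ l, x l * g u.1 y u.2 l) * (∑ l, x l * g u.1 y u.2 l) ∂P) ν :=
      hsqint.integral_prod_left
    have hfinal : (∫ y, (∫ u : S × T, ∑ l, x l * g u.1 y u.2 l ∂P)
          * (∫ u : S × T, ∑ l, x l * g u.1 y u.2 l ∂P) ∂ν)
        ≤ ∫ p : S × (S × T), (∑ l, x l * g p.2.1 p.1 p.2.2 l)
            * (∑ l, x l * g p.2.1 p.1 p.2.2 l) ∂(ν.prod P) := by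
      rw [hright]
      exact integral_mono_of_nonneg
        (Filter.Eventually.of_forall fun y => mul_self_nonneg _) hgi hptwise
    exact sub_nonneg.2 hfinal
end

section
/- The L×L matrix E[Z₁₂ Z₁₂ᵀ] − 2·E[Z₁₂ Z₂₃ᵀ] + E[Z₁₂]·E[Z₁₂]ᵀ is symmetric positive semidefinite. -/
open MeasureTheory ProbabilityTheory

section Helpers

variable {α β γ δ : Type*} [MeasurableSpace α] [MeasurableSpace β] [MeasurableSpace γ]
  [MeasurableSpace δ]

lemma mp_fst (μ : Measure α) (ν : Measure β) [IsProbabilityMeasure ν] :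
    MeasurePreserving Prod.fst (μ.prod ν) μ :=
  ⟨measurable_fst, by simp [Measure.map_fst_prod]⟩

lemma mp_snd (μ : Measure α) (ν : Measure β) [IsProbabilityMeasure μ] [SFinite ν] :
    MeasurePreserving Prod.snd (μ.prod ν) ν :=
  ⟨measurable_snd, by simp [Measure.map_snd_prod]⟩

lemma mp_swap312 (μ : Measure α) (ν : Measure β) (κ : Measure γ)
    [SFinite μ] [SFinite ν] [SFinite κ] :
    MeasurePreserving (fun p : α × β × γ => (p.2.1, (p.1, p.2.2)))
      (μ.prod (ν.prod κ)) (ν.prod (μ.prod κ)) := by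
  have e1 : MeasurePreserving (MeasurableEquiv.prodAssoc.symm : α × β × γ ≃ᵐ (α × β) × γ)
      (μ.prod (ν.prod κ)) ((μ.prod ν).prod κ) :=
    (measurePreserving_prodAssoc μ ν κ).symm MeasurableEquiv.prodAssoc
  have e2 : MeasurePreserving (Prod.map (Prod.swap : α × β → β × α) (id : γ → γ))
      ((μ.prod ν).prod κ) ((ν.prod μ).prod κ) :=
    (Measure.measurePreserving_swap).prod (MeasurePreserving.id κ)
  have e3 := measurePreserving_prodAssoc ν μ κ
  have h := (e3.comp e2).comp e1
  convert h using 1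
  rfl

lemma mp_integral_comp {μ : Measure α} {ν : Measure β} {f : α → β} {g : β → ℝ}
    (hf : MeasurePreserving f μ ν) (hg : AEStronglyMeasurable g ν) :
    ∫ x, g (f x) ∂μ = ∫ y, g y ∂ν := by
  rw [← hf.map_eq, integral_map hf.measurable.aemeasurable (by rwa [hf.map_eq])]

lemma l2_mul_integrable {μ : Measure α} {f g : α → ℝ} (hf : MemLp f 2 μ) (hg : MemLp g 2 μ) :
    Integrable (fun x => f x * g x) μ := by
  have h := ((hf.add hg).integrable_sq.sub hf.integrable_sq).sub hg.integrable_sq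
  have heq : (fun x => f x * g x) = fun x => (((f x + g x) ^ 2 - f x ^ 2) - g x ^ 2) / 2 := by
    funext x; ring
  rw [heq]
  exact h.div_const 2

lemma sq_integral_le {μ : Measure α} [IsProbabilityMeasure μ] {f : α → ℝ}
    (h1 : Integrable f μ) (h2 : Integrable (fun x => f x ^ 2) μ) :
    (∫ x, f x ∂μ) ^ 2 ≤ ∫ x, f x ^ 2 ∂μ := by
  set c := ∫ x, f x ∂μ with hc
  have key : 0 ≤ ∫ x, (f x - c) ^ 2 ∂μ := integral_nonneg fun x => sq_nonneg _
  have heq : (fun x => (f x - c) ^ 2) = fun x => (f x ^ 2 - 2 * c * f x) + c ^ 2 := by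
    funext x; ring
  have hsub : Integrable (fun x => f x ^ 2 - 2 * c * f x) μ := h2.sub (h1.const_mul (2 * c))
  rw [heq, integral_add hsub (integrable_const _),
    integral_sub h2 (h1.const_mul (2 * c)), integral_const_mul, integral_const] at key
  simp only [probReal_univ, one_smul] at key
  nlinarith [key]

end Helpers

section Abstract

variable {S T : Type*} [MeasurableSpace S] [MeasurableSpace T]

/-- `hat a` : the function on `S × (S × T)` with the "center" variable first. -/
def hat (a : S → S → T → ℝ) : S × S × T → ℝ := fun p => a p.2.1 p.1 p.2.2

/-- `Ff ν τ a y = ∫ a(x, y, w) dν(x) dτ(w)`. -/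
noncomputable def Ff (ν : Measure S) (τ : Measure T) (a : S → S → T → ℝ) : S → ℝ :=
  fun y => ∫ q : S × T, a q.1 y q.2 ∂(ν.prod τ)

variable (ν : Measure S) (τ : Measure T) [IsProbabilityMeasure ν] [IsProbabilityMeasure τ]
variable {a b : S → S → T → ℝ}

lemma Ff_sm (hma : Measurable (hat a)) : StronglyMeasurable (Ff ν τ a) := by
  have : StronglyMeasurable (hat a) := hma.stronglyMeasurable
  exact this.integral_prod_right'

lemma Ff_memlp (hma : Measurable (hat a)) (ha2 : MemLp (hat a) 2 (ν.prod (ν.prod τ))) :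
    MemLp (Ff ν τ a) 2 ν := by
  have hsm := Ff_sm ν τ hma
  rw [memLp_two_iff_integrable_sq hsm.aestronglyMeasurable]
  have hH : Integrable (fun y => ∫ q, (hat a (y, q)) ^ 2 ∂(ν.prod τ)) ν :=
    ha2.integrable_sq.integral_prod_left
  have hasm : AEStronglyMeasurable (fun y => (Ff ν τ a y) ^ 2) ν :=
    (hsm.mul hsm).aestronglyMeasurable.congr
      (ae_of_all _ fun y => (sq (Ff ν τ a y)).symm)
  refine hH.mono' hasm ?_
  filter_upwards [(ha2.integrable one_le_two).prod_right_ae,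
    ha2.integrable_sq.prod_right_ae] with y h1 h2
  have hb : (Ff ν τ a y) ^ 2 ≤ ∫ q, (hat a (y, q)) ^ 2 ∂(ν.prod τ) := sq_integral_le h1 h2
  calc ‖(Ff ν τ a y) ^ 2‖ = (Ff ν τ a y) ^ 2 := by
        rw [Real.norm_eq_abs, abs_of_nonneg (sq_nonneg _)]
    _ ≤ _ := hb


lemma mp_21 : MeasurePreserving (fun p : S × S × T => p.2.1) (ν.prod (ν.prod τ)) ν :=
  (mp_fst ν τ).comp (mp_snd ν (ν.prod τ))

lemma mp_proj1 :
    MeasurePreserving (fun p : (S × S × S) × (T × T) => ((p.1.2.1, (p.1.1, p.2.1)) : S × S × T))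
      ((ν.prod (ν.prod ν)).prod (τ.prod τ)) (ν.prod (ν.prod τ)) := by
  have h1 : MeasurePreserving (Prod.map (Prod.map (id : S → S) (Prod.fst : S × S → S))
        (Prod.fst : T × T → T))
      ((ν.prod (ν.prod ν)).prod (τ.prod τ)) ((ν.prod ν).prod τ) :=
    ((MeasurePreserving.id ν).prod (mp_fst ν ν)).prod (mp_fst τ τ)
  have h2 := measurePreserving_prodAssoc ν ν τ
  have h3 := mp_swap312 ν ν τ
  have h := (h3.comp h2).comp h1
  convert h using 1
  rfl

lemma mp_proj2 :
    MeasurePreserving (fun p : (S × S × S) × (T × T) => ((p.1.2.2, (p.1.2.1, p.2.2)) : S × S × T))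
      ((ν.prod (ν.prod ν)).prod (τ.prod τ)) (ν.prod (ν.prod τ)) := by
  have h1 : MeasurePreserving (Prod.map (Prod.snd : S × S × S → S × S) (Prod.snd : T × T → T))
      ((ν.prod (ν.prod ν)).prod (τ.prod τ)) ((ν.prod ν).prod τ) :=
    (mp_snd ν (ν.prod ν)).prod (mp_snd τ τ)
  have h2 := measurePreserving_prodAssoc ν ν τ
  have h3 := mp_swap312 ν ν τ
  have h := (h3.comp h2).comp h1
  convert h using 1
  rfl

lemma int_hat_eq (ha2 : MemLp (hat a) 2 (ν.prod (ν.prod τ))) :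
    ∫ p, hat a p ∂(ν.prod (ν.prod τ)) = ∫ y, Ff ν τ a y ∂ν := by
  rw [MeasureTheory.integral_prod _ (ha2.integrable one_le_two)]
  rfl

lemma memlp_Ff_fst (hma : Measurable (hat a)) (ha2 : MemLp (hat a) 2 (ν.prod (ν.prod τ))) :
    MemLp (fun p : S × S × T => Ff ν τ a p.1) 2 (ν.prod (ν.prod τ)) :=
  (Ff_memlp ν τ hma ha2).comp_measurePreserving (mp_fst ν (ν.prod τ))

lemma memlp_Ff_21 (hma : Measurable (hat a)) (ha2 : MemLp (hat a) 2 (ν.prod (ν.prod τ))) :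
    MemLp (fun p : S × S × T => Ff ν τ a p.2.1) 2 (ν.prod (ν.prod τ)) :=
  (Ff_memlp ν τ hma ha2).comp_measurePreserving (mp_21 ν τ)

lemma int_Ff_fst (hma : Measurable (hat a)) :
    ∫ p, Ff ν τ a p.1 ∂(ν.prod (ν.prod τ)) = ∫ y, Ff ν τ a y ∂ν :=
  mp_integral_comp (mp_fst ν (ν.prod τ)) (Ff_sm ν τ hma).aestronglyMeasurable

lemma int_Ff_21 (hma : Measurable (hat a)) :
    ∫ p, Ff ν τ a p.2.1 ∂(ν.prod (ν.prod τ)) = ∫ y, Ff ν τ a y ∂ν :=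
  mp_integral_comp (mp_21 ν τ) (Ff_sm ν τ hma).aestronglyMeasurable

lemma int_hat_mul_Ff_fst (hma : Measurable (hat a)) (hmb : Measurable (hat b))
    (ha2 : MemLp (hat a) 2 (ν.prod (ν.prod τ))) (hb2 : MemLp (hat b) 2 (ν.prod (ν.prod τ))) :
    ∫ p, hat a p * Ff ν τ b p.1 ∂(ν.prod (ν.prod τ))
      = ∫ y, Ff ν τ a y * Ff ν τ b y ∂ν := by
  have hint : Integrable (fun p : S × S × T => hat a p * Ff ν τ b p.1) (ν.prod (ν.prod τ)) :=
    l2_mul_integrable ha2 (memlp_Ff_fst ν τ hmb hb2)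
  rw [MeasureTheory.integral_prod _ hint]
  dsimp only
  simp_rw [integral_mul_const]
  rfl

lemma int_hat_mul_Ff_21 (hma : Measurable (hat a)) (hmb : Measurable (hat b))
    (hsa : ∀ x y w, a x y w = a y x w)
    (ha2 : MemLp (hat a) 2 (ν.prod (ν.prod τ))) (hb2 : MemLp (hat b) 2 (ν.prod (ν.prod τ))) :
    ∫ p, hat a p * Ff ν τ b p.2.1 ∂(ν.prod (ν.prod τ))
      = ∫ y, Ff ν τ a y * Ff ν τ b y ∂ν := by
  have hmp := mp_swap312 ν ν τ
  have hgasm : AEStronglyMeasurable (fun p : S × S × T => hat a p * Ff ν τ b p.2.1)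
      (ν.prod (ν.prod τ)) :=
    (hma.stronglyMeasurable.mul
      ((Ff_sm ν τ hmb).comp_measurable (measurable_fst.comp measurable_snd))).aestronglyMeasurable
  have key := mp_integral_comp hmp hgasm
  rw [← key]
  have h : ∀ p : S × S × T,
      hat a ((p.2.1, (p.1, p.2.2)) : S × S × T)
        * Ff ν τ b (((p.2.1, (p.1, p.2.2)) : S × S × T)).2.1
      = hat a p * Ff ν τ b p.1 := by
    intro p
    simp only [hat]
    rw [hsa]
  simp_rw [h]
  exact int_hat_mul_Ff_fst ν τ hma hmb ha2 hb2

lemma int_Ff_fst_mul_Ff_21 (hma : Measurable (hat a)) (hmb : Measurable (hat b)) :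
    ∫ p, Ff ν τ a p.1 * Ff ν τ b p.2.1 ∂(ν.prod (ν.prod τ))
      = (∫ y, Ff ν τ a y ∂ν) * ∫ y, Ff ν τ b y ∂ν := by
  have h := MeasureTheory.integral_prod_mul (μ := ν) (ν := ν.prod τ)
    (Ff ν τ a) (fun q : S × T => Ff ν τ b q.1)
  rw [show (∫ p, Ff ν τ a p.1 * Ff ν τ b p.2.1 ∂(ν.prod (ν.prod τ)))
    = ∫ z : S × S × T, Ff ν τ a z.1 * (fun q : S × T => Ff ν τ b q.1) z.2 ∂(ν.prod (ν.prod τ))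
    from rfl, h, mp_integral_comp (mp_fst ν τ) (Ff_sm ν τ hmb).aestronglyMeasurable]

lemma int_Ff_fst_mul_Ff_fst (hma : Measurable (hat a)) (hmb : Measurable (hat b)) :
    ∫ p, Ff ν τ a p.1 * Ff ν τ b p.1 ∂(ν.prod (ν.prod τ))
      = ∫ y, Ff ν τ a y * Ff ν τ b y ∂ν :=
  mp_integral_comp (mp_fst ν (ν.prod τ))
    ((Ff_sm ν τ hma).mul (Ff_sm ν τ hmb)).aestronglyMeasurable

lemma int_Ff_21_mul_Ff_21 (hma : Measurable (hat a)) (hmb : Measurable (hat b)) :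
    ∫ p, Ff ν τ a p.2.1 * Ff ν τ b p.2.1 ∂(ν.prod (ν.prod τ))
      = ∫ y, Ff ν τ a y * Ff ν τ b y ∂ν :=
  mp_integral_comp (mp_21 ν τ)
    ((Ff_sm ν τ hma).mul (Ff_sm ν τ hmb)).aestronglyMeasurable


lemma measurable_A2 (hma : Measurable (hat a)) :
    StronglyMeasurable (fun q : S × S => ∫ w, a q.1 q.2 w ∂τ) := by
  have hm : StronglyMeasurable (fun p : (S × S) × T => a p.1.1 p.1.2 p.2) := by
    have : Measurable (fun p : (S × S) × T => ((p.1.2, (p.1.1, p.2)) : S × S × T)) := by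
      fun_prop
    exact (hma.comp this).stronglyMeasurable
  exact hm.integral_prod_right'

/-- The key "B-term" identity : the mixed integral over the 5-fold product equals
`∫ Fa * Fb dν`. -/
lemma int_B (hma : Measurable (hat a)) (hmb : Measurable (hat b))
    (hsb : ∀ x y w, b x y w = b y x w)
    (ha2 : MemLp (hat a) 2 (ν.prod (ν.prod τ))) (hb2 : MemLp (hat b) 2 (ν.prod (ν.prod τ))) :
    ∫ p : (S × S × S) × (T × T),
        a p.1.1 p.1.2.1 p.2.1 * b p.1.2.1 p.1.2.2 p.2.2
        ∂((ν.prod (ν.prod ν)).prod (τ.prod τ))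
      = ∫ y, Ff ν τ a y * Ff ν τ b y ∂ν := by
  set ρ₅ := (ν.prod (ν.prod ν)).prod (τ.prod τ) with hρ₅
  have hA := ha2.comp_measurePreserving (mp_proj1 ν τ)
  have hB := hb2.comp_measurePreserving (mp_proj2 ν τ)
  have hint : Integrable
      (fun p : (S × S × S) × (T × T) => a p.1.1 p.1.2.1 p.2.1 * b p.1.2.1 p.1.2.2 p.2.2) ρ₅ :=
    l2_mul_integrable hA hB
  rw [MeasureTheory.integral_prod _ hint]
  -- inner integral factorizes
  have h1 : (fun x : S × S × S => ∫ w : T × T,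
        a x.1 x.2.1 w.1 * b x.2.1 x.2.2 w.2 ∂(τ.prod τ))
      = fun x : S × S × S => (∫ w, a x.1 x.2.1 w ∂τ) * ∫ w, b x.2.1 x.2.2 w ∂τ := by
    funext x
    exact MeasureTheory.integral_prod_mul (fun w => a x.1 x.2.1 w) (fun w => b x.2.1 x.2.2 w)
  rw [h1]
  -- integrability of the factorized integrand over ν³
  have hh : Integrable (fun x : S × S × S =>
      (∫ w, a x.1 x.2.1 w ∂τ) * ∫ w, b x.2.1 x.2.2 w ∂τ) (ν.prod (ν.prod ν)) := by
    have := hint.integral_prod_left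
    refine this.congr (ae_of_all _ fun x => ?_)
    exact MeasureTheory.integral_prod_mul (fun w => a x.1 x.2.1 w) (fun w => b x.2.1 x.2.2 w)
  -- swap the first two coordinates
  have hmp := mp_swap312 ν ν ν
  have hasm : AEStronglyMeasurable (fun x : S × S × S =>
      (∫ w, a x.1 x.2.1 w ∂τ) * ∫ w, b x.2.1 x.2.2 w ∂τ) (ν.prod (ν.prod ν)) := by
    have h2 := measurable_A2 τ hma
    have h3 := measurable_A2 τ hmb
    exact ((h2.comp_measurable (by fun_prop : Measurable (fun x : S × S × S => (x.1, x.2.1)))).mul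
      (h3.comp_measurable
        (by fun_prop : Measurable (fun x : S × S × S => (x.2.1, x.2.2))))).aestronglyMeasurable
  have key := mp_integral_comp hmp hasm
  rw [← key]
  dsimp only
  have hint2 : Integrable (fun x : S × S × S =>
      (∫ w, a x.2.1 x.1 w ∂τ) * ∫ w, b x.1 x.2.2 w ∂τ) (ν.prod (ν.prod ν)) :=
    (hmp.integrable_comp hasm).2 hh
  rw [MeasureTheory.integral_prod _ hint2]
  dsimp only
  have h4 : ∀ y : S, (∫ q : S × S, (∫ w, a q.1 y w ∂τ) * ∫ w, b y q.2 w ∂τ ∂(ν.prod ν))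
      = (∫ x, ∫ w, a x y w ∂τ ∂ν) * ∫ x, ∫ w, b y x w ∂τ ∂ν := fun y =>
    MeasureTheory.integral_prod_mul (fun x => ∫ w, a x y w ∂τ) (fun x => ∫ w, b y x w ∂τ)
  simp_rw [h4]
  -- now identify the two factors with Fa and Fb, a.e. in y
  refine integral_congr_ae ?_
  filter_upwards [(ha2.integrable one_le_two).prod_right_ae,
    (hb2.integrable one_le_two).prod_right_ae] with y h1a h1b
  have ea : (∫ x, ∫ w, a x y w ∂τ ∂ν) = Ff ν τ a y :=
    (MeasureTheory.integral_prod _ h1a).symm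
  have eb : (∫ x, ∫ w, b y x w ∂τ ∂ν) = Ff ν τ b y := by
    have : (fun x : S => ∫ w, b y x w ∂τ) = fun x : S => ∫ w, b x y w ∂τ := by
      funext x; simp_rw [hsb y x]
    rw [this]
    exact (MeasureTheory.integral_prod _ h1b).symm
  rw [ea, eb]


lemma integral_sub_mul_sub {α : Type*} [MeasurableSpace α] {P : Measure α}
    {u s u' s' : α → ℝ} (hu : MemLp u 2 P) (hs : MemLp s 2 P)
    (hu' : MemLp u' 2 P) (hs' : MemLp s' 2 P) :
    ∫ x, (u x - s x) * (u' x - s' x) ∂P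
      = ∫ x, u x * u' x ∂P - ∫ x, u x * s' x ∂P - ∫ x, s x * u' x ∂P
        + ∫ x, s x * s' x ∂P := by
  have i1 := l2_mul_integrable hu hu'
  have i2 := l2_mul_integrable hu hs'
  have i3 := l2_mul_integrable hs hu'
  have i4 := l2_mul_integrable hs hs'
  have e : (fun x => (u x - s x) * (u' x - s' x))
      = fun x => ((u x * u' x - u x * s' x) - s x * u' x) + s x * s' x := by
    funext x; ring
  have j1 : Integrable (fun x => u x * u' x - u x * s' x) P := i1.sub i2
  have j2 : Integrable (fun x => u x * u' x - u x * s' x - s x * u' x) P := j1.sub i3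
  rw [e, integral_add j2 i4, integral_sub j1 i3, integral_sub i1 i2]

/-- The Gram matrix of a family of `L²` functions is positive semidefinite. -/
lemma gram_psd {α : Type*} [MeasurableSpace α] (P : Measure α) (L : ℕ)
    (r : Fin L → α → ℝ) (hr : ∀ l, MemLp (r l) 2 P) :
    Matrix.PosSemidef (Matrix.of fun l l' : Fin L => ∫ x, r l x * r l' x ∂P) := by
  have hint : ∀ l l', Integrable (fun x => r l x * r l' x) P :=
    fun l l' => l2_mul_integrable (hr l) (hr l')
  constructor
  · ext l l'
    simp only [Matrix.conjTranspose_apply, Matrix.of_apply, star_trivial]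
    simp_rw [mul_comm]
  · intro v
    have h0 : ∀ x, (∑ l, v l * r l x) * (∑ l', v l' * r l' x)
        = ∑ l, ∑ l', (v l * v l') * (r l x * r l' x) := by
      intro x
      rw [Finset.sum_mul_sum]
      exact Finset.sum_congr rfl fun l _ => Finset.sum_congr rfl fun l' _ => by ring
    have h1 : ∫ x, (∑ l, v l * r l x) * (∑ l', v l' * r l' x) ∂P
        = ∑ l, ∑ l', (v l * v l') * ∫ x, r l x * r l' x ∂P := by
      simp_rw [h0]
      rw [integral_finset_sum _ fun l _ =>
        integrable_finset_sum _ fun l' _ => ((hint l l').const_mul _)]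
      refine Finset.sum_congr rfl fun l _ => ?_
      rw [integral_finset_sum _ fun l' _ => ((hint l l').const_mul _)]
      exact Finset.sum_congr rfl fun l' _ => integral_const_mul _ _
    have h2 : (0 : ℝ) ≤ ∫ x, (∑ l, v l * r l x) * (∑ l', v l' * r l' x) ∂P :=
      integral_nonneg fun x => mul_self_nonneg _
    rw [h1] at h2
    have hexp : dotProduct (star v)
        ((Matrix.of fun l l' : Fin L => ∫ x, r l x * r l' x ∂P).mulVec v)
        = ∑ l, ∑ l', (v l * v l') * ∫ x, r l x * r l' x ∂P := by
      simp only [star_trivial, dotProduct, Matrix.mulVec, Matrix.of_apply]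
      refine Finset.sum_congr rfl fun l _ => ?_
      rw [Finset.mul_sum]
      exact Finset.sum_congr rfl fun l' _ => by ring
    exact le_of_le_of_eq (le_of_eq_of_le rfl h2) (hexp.symm.trans (by
      simp [Finsupp.sum_fintype, dotProduct, Matrix.mulVec, Finset.mul_sum, mul_assoc]))


lemma key_pair (hma : Measurable (hat a)) (hmb : Measurable (hat b))
    (hsa : ∀ x y w, a x y w = a y x w) (hsb : ∀ x y w, b x y w = b y x w)
    (ha2 : MemLp (hat a) 2 (ν.prod (ν.prod τ))) (hb2 : MemLp (hat b) 2 (ν.prod (ν.prod τ))) :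
    ∫ p, (hat a p - Ff ν τ a p.1 - Ff ν τ a p.2.1 + (∫ y, Ff ν τ a y ∂ν))
        * (hat b p - Ff ν τ b p.1 - Ff ν τ b p.2.1 + (∫ y, Ff ν τ b y ∂ν)) ∂(ν.prod (ν.prod τ))
      = ∫ p, hat a p * hat b p ∂(ν.prod (ν.prod τ))
        - 2 * ∫ y, Ff ν τ a y * Ff ν τ b y ∂ν
        + (∫ y, Ff ν τ a y ∂ν) * ∫ y, Ff ν τ b y ∂ν := by
  have hF1a := memlp_Ff_fst ν τ hma ha2
  have hF2a := memlp_Ff_21 ν τ hma ha2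
  have hF1b := memlp_Ff_fst ν τ hmb hb2
  have hF2b := memlp_Ff_21 ν τ hmb hb2
  have hsa2 : MemLp (fun p : S × S × T =>
      Ff ν τ a p.1 + Ff ν τ a p.2.1 - (∫ y, Ff ν τ a y ∂ν)) 2 (ν.prod (ν.prod τ)) :=
    (hF1a.add hF2a).sub (memLp_const _)
  have hsb2 : MemLp (fun p : S × S × T =>
      Ff ν τ b p.1 + Ff ν τ b p.2.1 - (∫ y, Ff ν τ b y ∂ν)) 2 (ν.prod (ν.prod τ)) :=
    (hF1b.add hF2b).sub (memLp_const _)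
  have eint : ∫ p, (hat a p - Ff ν τ a p.1 - Ff ν τ a p.2.1 + (∫ y, Ff ν τ a y ∂ν))
        * (hat b p - Ff ν τ b p.1 - Ff ν τ b p.2.1 + (∫ y, Ff ν τ b y ∂ν)) ∂(ν.prod (ν.prod τ))
      = ∫ p, (hat a p - (Ff ν τ a p.1 + Ff ν τ a p.2.1 - (∫ y, Ff ν τ a y ∂ν)))
        * (hat b p - (Ff ν τ b p.1 + Ff ν τ b p.2.1 - (∫ y, Ff ν τ b y ∂ν)))
          ∂(ν.prod (ν.prod τ)) := by
    congr 1; funext p; ring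
  rw [eint, integral_sub_mul_sub ha2 hsa2 hb2 hsb2]
  have hcomm : ∫ y, Ff ν τ b y * Ff ν τ a y ∂ν = ∫ y, Ff ν τ a y * Ff ν τ b y ∂ν := by
    congr 1; funext y; ring
  -- T2 = ∫ hat a * s_b
  have i1 := l2_mul_integrable ha2 hF1b
  have i2 := l2_mul_integrable ha2 hF2b
  have i3 : Integrable (hat a) (ν.prod (ν.prod τ)) := ha2.integrable one_le_two
  have hT2 : ∫ p, hat a p * (Ff ν τ b p.1 + Ff ν τ b p.2.1 - (∫ y, Ff ν τ b y ∂ν))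
        ∂(ν.prod (ν.prod τ))
      = 2 * (∫ y, Ff ν τ a y * Ff ν τ b y ∂ν)
        - (∫ y, Ff ν τ b y ∂ν) * ∫ y, Ff ν τ a y ∂ν := by
    have e2 : (fun p : S × S × T => hat a p
          * (Ff ν τ b p.1 + Ff ν τ b p.2.1 - (∫ y, Ff ν τ b y ∂ν)))
        = fun p => (hat a p * Ff ν τ b p.1 + hat a p * Ff ν τ b p.2.1)
          - (∫ y, Ff ν τ b y ∂ν) * hat a p := by
      funext p; ring
    have i12 : Integrable (fun p : S × S × T =>
        hat a p * Ff ν τ b p.1 + hat a p * Ff ν τ b p.2.1) (ν.prod (ν.prod τ)) := i1.add i2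
    rw [e2, integral_sub i12 (i3.const_mul _), integral_add i1 i2, integral_const_mul,
      int_hat_mul_Ff_fst ν τ hma hmb ha2 hb2, int_hat_mul_Ff_21 ν τ hma hmb hsa ha2 hb2,
      int_hat_eq ν τ ha2]
    ring
  -- T3 = ∫ s_a * hat b
  have i4 := l2_mul_integrable hb2 hF1a
  have i5 := l2_mul_integrable hb2 hF2a
  have i6 : Integrable (hat b) (ν.prod (ν.prod τ)) := hb2.integrable one_le_two
  have hT3 : ∫ p, (Ff ν τ a p.1 + Ff ν τ a p.2.1 - (∫ y, Ff ν τ a y ∂ν)) * hat b p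
        ∂(ν.prod (ν.prod τ))
      = 2 * (∫ y, Ff ν τ a y * Ff ν τ b y ∂ν)
        - (∫ y, Ff ν τ a y ∂ν) * ∫ y, Ff ν τ b y ∂ν := by
    have e3 : (fun p : S × S × T =>
          (Ff ν τ a p.1 + Ff ν τ a p.2.1 - (∫ y, Ff ν τ a y ∂ν)) * hat b p)
        = fun p => (hat b p * Ff ν τ a p.1 + hat b p * Ff ν τ a p.2.1)
          - (∫ y, Ff ν τ a y ∂ν) * hat b p := by
      funext p; ring
    have i45 : Integrable (fun p : S × S × T =>
        hat b p * Ff ν τ a p.1 + hat b p * Ff ν τ a p.2.1) (ν.prod (ν.prod τ)) := i4.add i5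
    rw [e3, integral_sub i45 (i6.const_mul _), integral_add i4 i5, integral_const_mul,
      int_hat_mul_Ff_fst ν τ hmb hma hb2 ha2, int_hat_mul_Ff_21 ν τ hmb hma hsb hb2 ha2,
      int_hat_eq ν τ hb2, hcomm]
    ring
  -- T4 = ∫ s_a * s_b
  have k11 := l2_mul_integrable hF1a hF1b
  have k12 := l2_mul_integrable hF1a hF2b
  have k21 := l2_mul_integrable hF2a hF1b
  have k22 := l2_mul_integrable hF2a hF2b
  have kc1 : Integrable (fun p : S × S × T => Ff ν τ a p.1) (ν.prod (ν.prod τ)) :=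
    hF1a.integrable one_le_two
  have kc2 : Integrable (fun p : S × S × T => Ff ν τ a p.2.1) (ν.prod (ν.prod τ)) :=
    hF2a.integrable one_le_two
  have kc3 : Integrable (fun p : S × S × T => Ff ν τ b p.1) (ν.prod (ν.prod τ)) :=
    hF1b.integrable one_le_two
  have kc4 : Integrable (fun p : S × S × T => Ff ν τ b p.2.1) (ν.prod (ν.prod τ)) :=
    hF2b.integrable one_le_two
  have hT4 : ∫ p, (Ff ν τ a p.1 + Ff ν τ a p.2.1 - (∫ y, Ff ν τ a y ∂ν))
        * (Ff ν τ b p.1 + Ff ν τ b p.2.1 - (∫ y, Ff ν τ b y ∂ν)) ∂(ν.prod (ν.prod τ))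
      = 2 * (∫ y, Ff ν τ a y * Ff ν τ b y ∂ν)
        - (∫ y, Ff ν τ a y ∂ν) * ∫ y, Ff ν τ b y ∂ν := by
    have e4 : (fun p : S × S × T =>
          (Ff ν τ a p.1 + Ff ν τ a p.2.1 - (∫ y, Ff ν τ a y ∂ν))
          * (Ff ν τ b p.1 + Ff ν τ b p.2.1 - (∫ y, Ff ν τ b y ∂ν)))
        = fun p => ((((Ff ν τ a p.1 * Ff ν τ b p.1 + Ff ν τ a p.1 * Ff ν τ b p.2.1)
            + (Ff ν τ b p.1 * Ff ν τ a p.2.1 + Ff ν τ a p.2.1 * Ff ν τ b p.2.1))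
          - ((∫ y, Ff ν τ b y ∂ν) * Ff ν τ a p.1 + (∫ y, Ff ν τ b y ∂ν) * Ff ν τ a p.2.1))
          - ((∫ y, Ff ν τ a y ∂ν) * Ff ν τ b p.1 + (∫ y, Ff ν τ a y ∂ν) * Ff ν τ b p.2.1))
          + (∫ y, Ff ν τ a y ∂ν) * (∫ y, Ff ν τ b y ∂ν) := by
      funext p; ring
    have k21' : Integrable (fun p : S × S × T => Ff ν τ b p.1 * Ff ν τ a p.2.1)
        (ν.prod (ν.prod τ)) := l2_mul_integrable hF1b hF2a
    have m1 : Integrable (fun p : S × S × T =>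
        Ff ν τ a p.1 * Ff ν τ b p.1 + Ff ν τ a p.1 * Ff ν τ b p.2.1) (ν.prod (ν.prod τ)) :=
      k11.add k12
    have m2 : Integrable (fun p : S × S × T =>
        Ff ν τ b p.1 * Ff ν τ a p.2.1 + Ff ν τ a p.2.1 * Ff ν τ b p.2.1) (ν.prod (ν.prod τ)) :=
      k21'.add k22
    have m3 : Integrable (fun p : S × S × T =>
        (Ff ν τ a p.1 * Ff ν τ b p.1 + Ff ν τ a p.1 * Ff ν τ b p.2.1)
          + (Ff ν τ b p.1 * Ff ν τ a p.2.1 + Ff ν τ a p.2.1 * Ff ν τ b p.2.1))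
        (ν.prod (ν.prod τ)) := m1.add m2
    have m4 : Integrable (fun p : S × S × T =>
        (∫ y, Ff ν τ b y ∂ν) * Ff ν τ a p.1 + (∫ y, Ff ν τ b y ∂ν) * Ff ν τ a p.2.1)
        (ν.prod (ν.prod τ)) := (kc1.const_mul _).add (kc2.const_mul _)
    have m5 : Integrable (fun p : S × S × T =>
        (∫ y, Ff ν τ a y ∂ν) * Ff ν τ b p.1 + (∫ y, Ff ν τ a y ∂ν) * Ff ν τ b p.2.1)
        (ν.prod (ν.prod τ)) := (kc3.const_mul _).add (kc4.const_mul _)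
    have m6 : Integrable (fun p : S × S × T =>
        ((Ff ν τ a p.1 * Ff ν τ b p.1 + Ff ν τ a p.1 * Ff ν τ b p.2.1)
          + (Ff ν τ b p.1 * Ff ν τ a p.2.1 + Ff ν τ a p.2.1 * Ff ν τ b p.2.1))
        - ((∫ y, Ff ν τ b y ∂ν) * Ff ν τ a p.1 + (∫ y, Ff ν τ b y ∂ν) * Ff ν τ a p.2.1))
        (ν.prod (ν.prod τ)) := m3.sub m4
    have m7 : Integrable (fun p : S × S × T =>
        (((Ff ν τ a p.1 * Ff ν τ b p.1 + Ff ν τ a p.1 * Ff ν τ b p.2.1)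
          + (Ff ν τ b p.1 * Ff ν τ a p.2.1 + Ff ν τ a p.2.1 * Ff ν τ b p.2.1))
        - ((∫ y, Ff ν τ b y ∂ν) * Ff ν τ a p.1 + (∫ y, Ff ν τ b y ∂ν) * Ff ν τ a p.2.1))
        - ((∫ y, Ff ν τ a y ∂ν) * Ff ν τ b p.1 + (∫ y, Ff ν τ a y ∂ν) * Ff ν τ b p.2.1))
        (ν.prod (ν.prod τ)) := m6.sub m5
    rw [e4, integral_add m7 (integrable_const _), integral_sub m6 m5, integral_sub m3 m4,
      integral_add m1 m2, integral_add k11 k12, integral_add k21' k22,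
      integral_add (kc1.const_mul _) (kc2.const_mul _),
      integral_add (kc3.const_mul _) (kc4.const_mul _),
      integral_const_mul, integral_const_mul, integral_const_mul, integral_const_mul,
      integral_const,
      int_Ff_fst_mul_Ff_fst ν τ hma hmb, int_Ff_fst_mul_Ff_21 ν τ hma hmb,
      int_Ff_fst_mul_Ff_21 ν τ hmb hma, int_Ff_21_mul_Ff_21 ν τ hma hmb,
      int_Ff_fst ν τ hma, int_Ff_21 ν τ hma, int_Ff_fst ν τ hmb, int_Ff_21 ν τ hmb]
    simp only [probReal_univ, one_smul]
    ring
  rw [hT2, hT3, hT4]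
  ring


theorem abstract_psd (L : ℕ) (bb : Fin L → S → S → T → ℝ)
    (hmb : ∀ l, Measurable (hat (bb l))) (hsb : ∀ l x y w, bb l x y w = bb l y x w)
    (hb2 : ∀ l, MemLp (hat (bb l)) 2 (ν.prod (ν.prod τ))) :
    Matrix.PosSemidef (Matrix.of fun l l' : Fin L =>
      (∫ p, hat (bb l) p * hat (bb l') p ∂(ν.prod (ν.prod τ)))
        - 2 * (∫ p : (S × S × S) × (T × T),
            bb l p.1.1 p.1.2.1 p.2.1 * bb l' p.1.2.1 p.1.2.2 p.2.2
            ∂((ν.prod (ν.prod ν)).prod (τ.prod τ)))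
        + (∫ p, hat (bb l) p ∂(ν.prod (ν.prod τ))) * ∫ p, hat (bb l') p ∂(ν.prod (ν.prod τ))) := by
  have hentry : (Matrix.of fun l l' : Fin L =>
      (∫ p, hat (bb l) p * hat (bb l') p ∂(ν.prod (ν.prod τ)))
        - 2 * (∫ p : (S × S × S) × (T × T),
            bb l p.1.1 p.1.2.1 p.2.1 * bb l' p.1.2.1 p.1.2.2 p.2.2
            ∂((ν.prod (ν.prod ν)).prod (τ.prod τ)))
        + (∫ p, hat (bb l) p ∂(ν.prod (ν.prod τ))) * ∫ p, hat (bb l') p ∂(ν.prod (ν.prod τ)))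
      = Matrix.of fun l l' : Fin L =>
        ∫ p, (hat (bb l) p - Ff ν τ (bb l) p.1 - Ff ν τ (bb l) p.2.1
              + (∫ y, Ff ν τ (bb l) y ∂ν))
            * (hat (bb l') p - Ff ν τ (bb l') p.1 - Ff ν τ (bb l') p.2.1
              + (∫ y, Ff ν τ (bb l') y ∂ν)) ∂(ν.prod (ν.prod τ)) := by
    ext l l'
    simp only [Matrix.of_apply]
    rw [key_pair ν τ (hmb l) (hmb l') (hsb l) (hsb l') (hb2 l) (hb2 l'),
      int_B ν τ (hmb l) (hmb l') (hsb l') (hb2 l) (hb2 l'),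
      int_hat_eq ν τ (hb2 l), int_hat_eq ν τ (hb2 l')]
  rw [hentry]
  exact gram_psd _ L _ (fun l =>
    (((hb2 l).sub (memlp_Ff_fst ν τ (hmb l) (hb2 l))).sub
      (memlp_Ff_21 ν τ (hmb l) (hb2 l))).add (memLp_const _))

end Abstract

/-- Let `ξ₁,ξ₂,ξ₃` be i.i.d. random elements of `S` and `W₁₂,W₂₃` i.i.d. random elements of
`T`, independent of the `ξ`'s and of each other.  Let `g : S × S × T → ℝ^L` be measurable and
symmetric in its first two arguments, set `Z_{ij} := g(ξ_i, ξ_j, W_{ij})`, and assume each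
component of `Z₁₂` is square-integrable.  Then the `L×L` matrix
`E[Z₁₂Z₁₂ᵀ] − 2·E[Z₁₂Z₂₃ᵀ] + E[Z₁₂]·E[Z₁₂]ᵀ` is symmetric positive semidefinite.
Here `ξ 0, ξ 1, ξ 2` play the roles of `ξ₁, ξ₂, ξ₃` and `W 0, W 1` those of `W₁₂, W₂₃`. -/
theorem stmt_11 {Ω S T : Type*} [MeasurableSpace Ω] [MeasurableSpace S] [MeasurableSpace T]
    (μ : Measure Ω) [IsProbabilityMeasure μ] (L : ℕ)
    (ξ : Fin 3 → Ω → S) (W : Fin 2 → Ω → T) (g : S → S → T → Fin L → ℝ)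
    (hgmeas : Measurable fun p : S × S × T => g p.1 p.2.1 p.2.2)
    (hgsymm : ∀ x y w, g x y w = g y x w)
    (hξmeas : ∀ i, Measurable (ξ i)) (hWmeas : ∀ j, Measurable (W j))
    (hξindep : iIndepFun ξ μ)
    (hWindep : iIndepFun W μ)
    (hξW : IndepFun (fun ω i => ξ i ω) (fun ω j => W j ω) μ)
    (hξid : ∀ i, IdentDistrib (ξ i) (ξ 0) μ μ)
    (hWid : ∀ j, IdentDistrib (W j) (W 0) μ μ)
    (hsq : ∀ l, Integrable (fun ω => (g (ξ 0 ω) (ξ 1 ω) (W 0 ω) l) ^ 2) μ) :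
    Matrix.PosSemidef (Matrix.of fun l l' : Fin L =>
      (∫ ω, g (ξ 0 ω) (ξ 1 ω) (W 0 ω) l * g (ξ 0 ω) (ξ 1 ω) (W 0 ω) l' ∂μ)
        - 2 * (∫ ω, g (ξ 0 ω) (ξ 1 ω) (W 0 ω) l * g (ξ 1 ω) (ξ 2 ω) (W 1 ω) l' ∂μ)
        + (∫ ω, g (ξ 0 ω) (ξ 1 ω) (W 0 ω) l ∂μ) * ∫ ω, g (ξ 0 ω) (ξ 1 ω) (W 0 ω) l' ∂μ) := by
  classical
  set ν : Measure S := μ.map (ξ 0) with hν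
  set τ : Measure T := μ.map (W 0) with hτ
  haveI : IsProbabilityMeasure ν := Measure.isProbabilityMeasure_map (hξmeas 0).aemeasurable
  haveI : IsProbabilityMeasure τ := Measure.isProbabilityMeasure_map (hWmeas 0).aemeasurable
  set bb : Fin L → S → S → T → ℝ := fun l x y w => g x y w l with hbb
  have hmb : ∀ l, Measurable (hat (bb l)) := by
    intro l
    have hswap : Measurable (fun p : S × S × T => ((p.2.1, (p.1, p.2.2)) : S × S × T)) := by
      fun_prop
    exact (measurable_pi_apply l).comp (hgmeas.comp hswap)
  have hsb : ∀ l x y w, bb l x y w = bb l y x w := by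
    intro l x y w
    simp only [hbb]
    rw [hgsymm]
  -- the joint law
  have hmap12 : μ.map (fun ω => (ξ 1 ω, ξ 2 ω)) = ν.prod ν := by
    have h12 : IndepFun (ξ 1) (ξ 2) μ := hξindep.indepFun (by decide)
    rw [(indepFun_iff_map_prod_eq_prod_map_map (hξmeas 1).aemeasurable
      (hξmeas 2).aemeasurable).1 h12, (hξid 1).map_eq, (hξid 2).map_eq]
  have hmapX : μ.map (fun ω => (ξ 0 ω, (ξ 1 ω, ξ 2 ω))) = ν.prod (ν.prod ν) := by
    have h0 : IndepFun (ξ 0) (fun ω => (ξ 1 ω, ξ 2 ω)) μ :=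
      (hξindep.indepFun_prodMk hξmeas 1 2 0 (by decide) (by decide)).symm
    rw [(indepFun_iff_map_prod_eq_prod_map_map (hξmeas 0).aemeasurable
      ((hξmeas 1).prodMk (hξmeas 2)).aemeasurable).1 h0, hmap12]
  have hmapW : μ.map (fun ω => (W 0 ω, W 1 ω)) = τ.prod τ := by
    have h01 : IndepFun (W 0) (W 1) μ := hWindep.indepFun (by decide)
    rw [(indepFun_iff_map_prod_eq_prod_map_map (hWmeas 0).aemeasurable
      (hWmeas 1).aemeasurable).1 h01, (hWid 1).map_eq]
  have hXW : IndepFun (fun ω => (ξ 0 ω, (ξ 1 ω, ξ 2 ω))) (fun ω => (W 0 ω, W 1 ω)) μ := by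
    have hφ : Measurable (fun x : Fin 3 → S => ((x 0, (x 1, x 2)) : S × S × S)) := by fun_prop
    have hψ : Measurable (fun x : Fin 2 → T => ((x 0, x 1) : T × T)) := by fun_prop
    exact hξW.comp hφ hψ
  have hXmeas : Measurable (fun ω => ((ξ 0 ω, (ξ 1 ω, ξ 2 ω)) : S × S × S)) :=
    (hξmeas 0).prodMk ((hξmeas 1).prodMk (hξmeas 2))
  have hWmeas2 : Measurable (fun ω => ((W 0 ω, W 1 ω) : T × T)) :=
    (hWmeas 0).prodMk (hWmeas 1)
  have hmap : μ.map (fun ω => (((ξ 0 ω, (ξ 1 ω, ξ 2 ω)), (W 0 ω, W 1 ω)) :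
      (S × S × S) × (T × T))) = (ν.prod (ν.prod ν)).prod (τ.prod τ) := by
    rw [(indepFun_iff_map_prod_eq_prod_map_map hXmeas.aemeasurable
      hWmeas2.aemeasurable).1 hXW, hmapX, hmapW]
  have mpΦ : MeasurePreserving (fun ω => (((ξ 0 ω, (ξ 1 ω, ξ 2 ω)), (W 0 ω, W 1 ω)) :
      (S × S × S) × (T × T))) μ ((ν.prod (ν.prod ν)).prod (τ.prod τ)) :=
    ⟨hXmeas.prodMk hWmeas2, hmap⟩
  have mp1 : MeasurePreserving (fun ω => ((ξ 1 ω, (ξ 0 ω, W 0 ω)) : S × S × T)) μ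
      (ν.prod (ν.prod τ)) := (mp_proj1 ν τ).comp mpΦ
  -- square integrability
  have hb2 : ∀ l, MemLp (hat (bb l)) 2 (ν.prod (ν.prod τ)) := by
    intro l
    have hint : Integrable (fun p : S × S × T => hat (bb l) p ^ 2) (ν.prod (ν.prod τ)) :=
      (mp1.integrable_comp ((hmb l).pow_const 2).aestronglyMeasurable).1 (hsq l)
    exact (memLp_two_iff_integrable_sq (hmb l).aestronglyMeasurable).2 hint
  -- transfer the three integrals
  have hmat : (Matrix.of fun l l' : Fin L =>
      (∫ ω, g (ξ 0 ω) (ξ 1 ω) (W 0 ω) l * g (ξ 0 ω) (ξ 1 ω) (W 0 ω) l' ∂μ)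
        - 2 * (∫ ω, g (ξ 0 ω) (ξ 1 ω) (W 0 ω) l * g (ξ 1 ω) (ξ 2 ω) (W 1 ω) l' ∂μ)
        + (∫ ω, g (ξ 0 ω) (ξ 1 ω) (W 0 ω) l ∂μ) * ∫ ω, g (ξ 0 ω) (ξ 1 ω) (W 0 ω) l' ∂μ)
      = Matrix.of fun l l' : Fin L =>
      (∫ p, hat (bb l) p * hat (bb l') p ∂(ν.prod (ν.prod τ)))
        - 2 * (∫ p : (S × S × S) × (T × T),
            bb l p.1.1 p.1.2.1 p.2.1 * bb l' p.1.2.1 p.1.2.2 p.2.2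
            ∂((ν.prod (ν.prod ν)).prod (τ.prod τ)))
        + (∫ p, hat (bb l) p ∂(ν.prod (ν.prod τ)))
          * ∫ p, hat (bb l') p ∂(ν.prod (ν.prod τ)) := by
    ext l l'
    simp only [Matrix.of_apply]
    have eA : ∫ ω, g (ξ 0 ω) (ξ 1 ω) (W 0 ω) l * g (ξ 0 ω) (ξ 1 ω) (W 0 ω) l' ∂μ
        = ∫ p, hat (bb l) p * hat (bb l') p ∂(ν.prod (ν.prod τ)) :=
      mp_integral_comp mp1 ((hmb l).mul (hmb l')).aestronglyMeasurable
    have hBmeas : Measurable (fun p : (S × S × S) × (T × T) =>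
        bb l p.1.1 p.1.2.1 p.2.1 * bb l' p.1.2.1 p.1.2.2 p.2.2) := by
      have h1 : Measurable (fun p : (S × S × S) × (T × T) =>
          ((p.1.2.1, (p.1.1, p.2.1)) : S × S × T)) := by fun_prop
      have h2 : Measurable (fun p : (S × S × S) × (T × T) =>
          ((p.1.2.2, (p.1.2.1, p.2.2)) : S × S × T)) := by fun_prop
      exact ((hmb l).comp h1).mul ((hmb l').comp h2)
    have eB : ∫ ω, g (ξ 0 ω) (ξ 1 ω) (W 0 ω) l * g (ξ 1 ω) (ξ 2 ω) (W 1 ω) l' ∂μ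
        = ∫ p : (S × S × S) × (T × T),
            bb l p.1.1 p.1.2.1 p.2.1 * bb l' p.1.2.1 p.1.2.2 p.2.2
            ∂((ν.prod (ν.prod ν)).prod (τ.prod τ)) :=
      mp_integral_comp mpΦ hBmeas.aestronglyMeasurable
    have em : ∀ k, ∫ ω, g (ξ 0 ω) (ξ 1 ω) (W 0 ω) k ∂μ
        = ∫ p, hat (bb k) p ∂(ν.prod (ν.prod τ)) := fun k =>
      mp_integral_comp mp1 (hmb k).aestronglyMeasurable
    rw [eA, eB, em l, em l']
  rw [hmat]
  exact abstract_psd ν τ L bb hmb hsb hb2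
end

section
/- For all vectors u, w ∈ ℝ^N: |Σ_{i=1}^N (u_i³ − w_i³)| ≤ ‖u − w‖₂³ + 3·‖u‖₂·‖u − w‖₂² + 3·(Σ_{i=1}^N u_i⁴)^{1/2}·‖u − w‖₂. -/
/-!
With `d = u - w`, expand `u³ - w³ = 3u²d - 3ud² + d³` coordinatewise. The first sum is bounded
by Cauchy–Schwarz, `|Σ u²d| ≤ (Σ u⁴)^{1/2} ‖d‖`; in the other two one factor is bounded by its
sup norm, which is at most its Euclidean norm: `|Σ u d²| ≤ ‖u‖ ‖d‖²` and `|Σ d³| ≤ ‖d‖³`.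
-/

open Finset Real

variable {ι : Type*} (s : Finset ι)

lemma abs_le_sqrt_sum_sq {f : ι → ℝ} {i : ι} (hi : i ∈ s) : |f i| ≤ √(∑ j ∈ s, f j ^ 2) :=
  abs_le_sqrt (single_le_sum (fun j _ => sq_nonneg (f j)) hi)

lemma abs_sum_mul_le_sqrt_mul_sqrt (f g : ι → ℝ) :
    |∑ i ∈ s, f i * g i| ≤ √(∑ i ∈ s, f i ^ 2) * √(∑ i ∈ s, g i ^ 2) :=
  calc |∑ i ∈ s, f i * g i| ≤ ∑ i ∈ s, |f i| * |g i| := by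
        simpa only [abs_mul] using abs_sum_le_sum_abs (fun i => f i * g i) s
    _ ≤ √(∑ i ∈ s, |f i| ^ 2) * √(∑ i ∈ s, |g i| ^ 2) := sum_mul_le_sqrt_mul_sqrt _ _ _
    _ = √(∑ i ∈ s, f i ^ 2) * √(∑ i ∈ s, g i ^ 2) := by simp only [sq_abs]

lemma abs_sum_sq_mul_le (f g : ι → ℝ) :
    |∑ i ∈ s, f i ^ 2 * g i| ≤ √(∑ i ∈ s, f i ^ 4) * √(∑ i ∈ s, g i ^ 2) := by
  have h := abs_sum_mul_le_sqrt_mul_sqrt s (fun i => f i ^ 2) g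
  simp only [← pow_mul] at h
  exact h

lemma abs_sum_mul_sq_le (f g : ι → ℝ) :
    |∑ i ∈ s, f i * g i ^ 2| ≤ √(∑ i ∈ s, f i ^ 2) * ∑ i ∈ s, g i ^ 2 :=
  calc |∑ i ∈ s, f i * g i ^ 2| ≤ ∑ i ∈ s, |f i| * g i ^ 2 :=
        (abs_sum_le_sum_abs _ _).trans_eq (sum_congr rfl fun i _ => by rw [abs_mul, abs_sq])
    _ ≤ ∑ i ∈ s, √(∑ j ∈ s, f j ^ 2) * g i ^ 2 :=
        sum_le_sum fun i hi => by gcongr; exact abs_le_sqrt_sum_sq s hi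
    _ = √(∑ i ∈ s, f i ^ 2) * ∑ i ∈ s, g i ^ 2 := (mul_sum _ _ _).symm

lemma abs_sum_cube_le (f : ι → ℝ) : |∑ i ∈ s, f i ^ 3| ≤ √(∑ i ∈ s, f i ^ 2) ^ 3 :=
  calc |∑ i ∈ s, f i ^ 3| = |∑ i ∈ s, f i * f i ^ 2| := by simp only [← pow_succ']
    _ ≤ √(∑ i ∈ s, f i ^ 2) * ∑ i ∈ s, f i ^ 2 := abs_sum_mul_sq_le s f f
    _ = √(∑ i ∈ s, f i ^ 2) ^ 3 := by
        rw [← sq_sqrt (sum_nonneg fun i _ => sq_nonneg (f i)), sqrt_sq (sqrt_nonneg _)]; ring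

lemma sum_cube_sub_cube (u w : ι → ℝ) :
    ∑ i ∈ s, (u i ^ 3 - w i ^ 3) = 3 * ∑ i ∈ s, u i ^ 2 * (u i - w i)
      - 3 * ∑ i ∈ s, u i * (u i - w i) ^ 2 + ∑ i ∈ s, (u i - w i) ^ 3 := by
  simp only [mul_sum, ← sum_sub_distrib, ← sum_add_distrib]
  exact sum_congr rfl fun i _ => by ring

/-- For all vectors `u, w ∈ ℝ^N`:
`|Σᵢ (uᵢ³ − wᵢ³)| ≤ ‖u−w‖₂³ + 3‖u‖₂‖u−w‖₂² + 3(Σᵢ uᵢ⁴)^{1/2}‖u−w‖₂`. -/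
theorem stmt_17 {N : ℕ} (u w : Fin N → ℝ) :
    |∑ i, (u i ^ 3 - w i ^ 3)| ≤
      Real.sqrt (∑ i, (u i - w i) ^ 2) ^ 3
        + 3 * Real.sqrt (∑ i, u i ^ 2) * Real.sqrt (∑ i, (u i - w i) ^ 2) ^ 2
        + 3 * Real.sqrt (∑ i, u i ^ 4) * Real.sqrt (∑ i, (u i - w i) ^ 2) := by
  rw [sum_cube_sub_cube]
  set d : Fin N → ℝ := fun i => u i - w i
  have hd : √(∑ i, d i ^ 2) ^ 2 = ∑ i, d i ^ 2 := sq_sqrt (sum_nonneg fun i _ => sq_nonneg _)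
  have h₁ := abs_sum_sq_mul_le univ u d
  have h₂ := abs_sum_mul_sq_le univ u d
  have h₃ := abs_sum_cube_le univ d
  calc _ ≤ |3 * ∑ i, u i ^ 2 * d i| + |3 * ∑ i, u i * d i ^ 2| + |∑ i, d i ^ 3| :=
        (abs_add_le _ _).trans (add_le_add_left (abs_sub _ _) _)
    _ = 3 * |∑ i, u i ^ 2 * d i| + 3 * |∑ i, u i * d i ^ 2| + |∑ i, d i ^ 3| := by
        rw [abs_mul, abs_mul, abs_of_pos (three_pos : (0 : ℝ) < 3)]
    _ ≤ _ := by rw [hd]; linarith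
end

section
/- Let γ ≥ 0, s > 0 and δ ∈ {−1, +1}, and set a := γ²·s and b := δ·(3γ²s² + s³). Then b ≠ 0 and the sign of b equals δ; moreover s is the unique real root of the polynomial x³ + 3a·x − |b|, and γ² = a/s. -/
lemma strictMono_pow_three_add_mul {R : Type*} [Ring R] [LinearOrder R] [IsStrictOrderedRing R]
    {c : R} (hc : 0 ≤ c) : StrictMono fun x : R => x ^ 3 + c * x :=
  (Odd.strictMono_pow (by decide)).add_monotone fun _ _ h => mul_le_mul_of_nonneg_left h hc

lemma Real.sign_mul_of_pos {δ p : ℝ} (hδ : δ = 1 ∨ δ = -1) (hp : 0 < p) :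
    Real.sign (δ * p) = δ := by
  rcases hδ with rfl | rfl
  · rw [one_mul, Real.sign_of_pos hp]
  · rw [neg_one_mul, Real.sign_of_neg (neg_lt_zero.2 hp)]

theorem stmt_19_general (γ s δ a b : ℝ) (hs : 0 < s) (hδ : δ = 1 ∨ δ = -1)
    (ha : a = γ ^ 2 * s) (hb : b = δ * (3 * γ ^ 2 * s ^ 2 + s ^ 3)) :
    b ≠ 0 ∧ Real.sign b = δ ∧
    (s ^ 3 + 3 * a * s - |b| = 0 ∧ ∀ x : ℝ, x ^ 3 + 3 * a * x - |b| = 0 → x = s) ∧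
    γ ^ 2 = a / s := by
  have hp : 0 < 3 * γ ^ 2 * s ^ 2 + s ^ 3 := by positivity
  have hδ_abs : |δ| = 1 := (abs_eq zero_le_one).2 hδ
  have hb_abs : |b| = s ^ 3 + 3 * a * s := by
    rw [hb, abs_mul, hδ_abs, one_mul, abs_of_pos hp, ha]; ring
  refine ⟨?_, hb ▸ Real.sign_mul_of_pos hδ hp, ⟨by rw [hb_abs]; ring, fun x hx => ?_⟩, ?_⟩
  · rw [← abs_pos, hb_abs, ha]; positivity
  · have h3a : 0 ≤ 3 * a := by rw [ha]; positivity
    exact (strictMono_pow_three_add_mul h3a).injective (by linarith)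
  · rw [ha, mul_div_cancel_right₀ _ hs.ne']

/-- Let `γ ≥ 0`, `s > 0`, `δ ∈ {−1,+1}`, and set `a := γ²s`, `b := δ(3γ²s² + s³)`.
Then `b ≠ 0` with `sign b = δ`; moreover `s` is the unique real root of `x³ + 3ax − |b|`
and `γ² = a/s`. -/
theorem stmt_19 (γ s δ a b : ℝ) (hγ : 0 ≤ γ) (hs : 0 < s) (hδ : δ = 1 ∨ δ = -1)
    (ha : a = γ ^ 2 * s) (hb : b = δ * (3 * γ ^ 2 * s ^ 2 + s ^ 3)) :
    b ≠ 0 ∧ Real.sign b = δ ∧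
    (s ^ 3 + 3 * a * s - |b| = 0 ∧ ∀ x : ℝ, x ^ 3 + 3 * a * x - |b| = 0 → x = s) ∧
    γ ^ 2 = a / s :=
  stmt_19_general γ s δ a b hs hδ ha hb
end
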